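/- arXiv:math/0305181 — 2 statements merged into one kernel-verified Lean document; each statement's English description precedes it below -/
import Mathlib

section
/- Let L be an algebraically closed field that is complete with respect to a nontrivial absolute value |·| (so L = ℂ or L is non-archimedean, e.g. ℂ_p). Let φ(z) = Σ_{n=0}^d a_n z^n ∈ L[z] be a polynomial of degree d ≥ 2 and let F ⊆ L be its filled Julia set. Then the transfinite diameter of F satisfies c(F) = |a_d|^{−1/(d−1)}. -/
/-- The product of pairwise distances `∏_{i ≠ j} d(x i, x j)`. -/
noncomputable def pairDistProd {α : Type*} (d : α → α → ℝ) {n : ℕ} (x : Fin n → α) : ℝ :=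
  ∏ i : Fin n, ∏ j : Fin n, if i = j then 1 else d (x i) (x j)

/-- The `n`-th diameter `d_n(A)` of a set `A` with respect to a distance function `d`:
the supremum over `n`-tuples of points of `A` of the geometric mean of pairwise distances. -/
noncomputable def nthDiam {α : Type*} (d : α → α → ℝ) (A : Set α) (n : ℕ) : ℝ :=
  sSup {r : ℝ | ∃ x : Fin n → α, (∀ i, x i ∈ A) ∧
    r = pairDistProd d x ^ (((n : ℝ) * ((n : ℝ) - 1))⁻¹)}

/-- The transfinite diameter `c(A)`: the limit (equivalently, by monotonicity, the infimum)
of the nonincreasing sequence `d_n(A)` for `n ≥ 2`. -/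
noncomputable def transDiam {α : Type*} (d : α → α → ℝ) (A : Set α) : ℝ :=
  ⨅ n : ℕ, nthDiam d A (n + 2)

/-- The `n`-th iterate of the polynomial map `z ↦ φ(z)`. -/
noncomputable def polyIter {L : Type*} [CommRing L] (φ : Polynomial L) (n : ℕ) : L → L :=
  (fun w => Polynomial.eval w φ)^[n]

/-- The filled Julia set of the polynomial `φ` over a normed field: the set of points whose
forward orbit does not tend to infinity in absolute value. -/
noncomputable def filledJulia {L : Type*} [NormedField L] (φ : Polynomial L) : Set L :=
  {z : L | ¬ Filter.Tendsto (fun n : ℕ => ‖polyIter φ n z‖) Filter.atTop Filter.atTop}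

open Polynomial Filter

section Dynamics

variable {L : Type*} [NormedField L]

lemma polyIter_succ (φ : L[X]) (n : ℕ) (z : L) :
    polyIter φ (n+1) z = polyIter φ n (φ.eval z) := by
  simpa [polyIter] using Function.iterate_succ_apply (fun w => Polynomial.eval w φ) n z

lemma polyIter_succ' (φ : L[X]) (n : ℕ) (z : L) :
    polyIter φ (n+1) z = φ.eval (polyIter φ n z) := by
  simpa [polyIter] using Function.iterate_succ_apply' (fun w => Polynomial.eval w φ) n z

lemma mem_filledJulia_eval {φ : L[X]} {z : L} :
    φ.eval z ∈ filledJulia φ ↔ z ∈ filledJulia φ := by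
  simp only [filledJulia, Set.mem_setOf_eq]
  have h : (fun n : ℕ => ‖polyIter φ n (φ.eval z)‖) = fun n : ℕ => ‖polyIter φ (n+1) z‖ := by
    funext n; rw [polyIter_succ]
  rw [h, not_iff_not]
  exact tendsto_add_atTop_iff_nat (f := fun n => ‖polyIter φ n z‖) 1

lemma polyIter_mem_filledJulia {φ : L[X]} {z : L} (hz : z ∈ filledJulia φ) (n : ℕ) :
    polyIter φ n z ∈ filledJulia φ := by
  induction n with
  | zero => exact hz
  | succ n ih => rw [polyIter_succ']; exact mem_filledJulia_eval.mpr ih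

lemma not_mem_filledJulia_of_bound {φ : L[X]} {z : L} {C : ℝ}
    (h : ∀ n, ‖polyIter φ n z‖ ≤ C) : False → True := fun h => trivial

lemma mem_filledJulia_of_bound {φ : L[X]} {z : L} {C : ℝ}
    (h : ∀ n, ‖polyIter φ n z‖ ≤ C) : z ∈ filledJulia φ := by
  intro ht
  obtain ⟨n, hn⟩ := (tendsto_atTop.mp ht (C + 1)).exists
  have := h n
  linarith

lemma natDegree_pos_of_two_le {φ : L[X]} (hd : 2 ≤ φ.natDegree) : φ ≠ 0 := by
  intro h; rw [h, natDegree_zero] at hd; omega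

lemma leadingCoeff_norm_pos {φ : L[X]} (hd : 2 ≤ φ.natDegree) : 0 < ‖φ.leadingCoeff‖ := by
  rw [norm_pos_iff]
  exact leadingCoeff_ne_zero.mpr (natDegree_pos_of_two_le hd)

/-- bound for polynomial evaluation on a ball -/
lemma norm_eval_le_of_norm_le (p : L[X]) {z : L} {B : ℝ} (h1 : 1 ≤ B) (hz : ‖z‖ ≤ B) :
    ‖p.eval z‖ ≤ (∑ i ∈ Finset.range (p.natDegree + 1), ‖p.coeff i‖) * B ^ p.natDegree := by
  rw [eval_eq_sum_range]
  refine le_trans (norm_sum_le _ _) ?_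
  rw [Finset.sum_mul]
  refine Finset.sum_le_sum fun i hi => ?_
  rw [norm_mul, norm_pow]
  refine mul_le_mul_of_nonneg_left ?_ (norm_nonneg _)
  calc ‖z‖ ^ i ≤ B ^ i := pow_le_pow_left₀ (norm_nonneg _) hz i
  _ ≤ B ^ p.natDegree := pow_le_pow_right₀ h1 (by simpa using Nat.lt_succ_iff.mp (Finset.mem_range.mp hi))

lemma exists_escape_bound (φ : L[X]) (hd : 2 ≤ φ.natDegree) :
    ∃ B : ℝ, 1 ≤ B ∧ ∀ z ∈ filledJulia φ, ‖z‖ ≤ B := by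
  classical
  set d := φ.natDegree with hdd
  set a := φ.leadingCoeff with hda
  have ha : 0 < ‖a‖ := leadingCoeff_norm_pos hd
  set S : ℝ := ∑ i ∈ Finset.range d, ‖φ.coeff i‖ with hS
  have hS0 : 0 ≤ S := Finset.sum_nonneg fun i _ => norm_nonneg _
  refine ⟨max 1 ((S + 2) / ‖a‖), le_max_left _ _, ?_⟩
  set B := max 1 ((S + 2) / ‖a‖) with hB
  have hB1 : (1:ℝ) ≤ B := le_max_left _ _
  -- escape estimate
  have key : ∀ z : L, B < ‖z‖ → 2 * ‖z‖ ≤ ‖φ.eval z‖ := by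
    intro z hz
    have hz1 : (1:ℝ) ≤ ‖z‖ := le_trans hB1 hz.le
    have heval : φ.eval z = a * z ^ d + ∑ i ∈ Finset.range d, φ.coeff i * z ^ i := by
      rw [eval_eq_sum_range, Finset.sum_range_succ]
      simp [hda, Polynomial.coeff_natDegree, add_comm]
      rfl
    have hlow : ‖∑ i ∈ Finset.range d, φ.coeff i * z ^ i‖ ≤ S * ‖z‖ ^ (d - 1) := by
      refine le_trans (norm_sum_le _ _) ?_
      rw [hS, Finset.sum_mul]
      refine Finset.sum_le_sum fun i hi => ?_
      rw [norm_mul, norm_pow]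
      refine mul_le_mul_of_nonneg_left ?_ (norm_nonneg _)
      exact pow_le_pow_right₀ hz1 (by have := Finset.mem_range.mp hi; omega)
    have hmain : ‖a‖ * ‖z‖ ^ d - S * ‖z‖ ^ (d - 1) ≤ ‖φ.eval z‖ := by
      calc ‖a‖ * ‖z‖ ^ d - S * ‖z‖ ^ (d-1)
          = ‖a * z ^ d‖ - S * ‖z‖ ^ (d-1) := by rw [norm_mul, norm_pow]
        _ ≤ ‖a * z ^ d‖ - ‖∑ i ∈ Finset.range d, φ.coeff i * z ^ i‖ := by linarith
        _ ≤ ‖a * z ^ d + ∑ i ∈ Finset.range d, φ.coeff i * z ^ i‖ := by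
            have h9 : ‖a * z ^ d‖ ≤ ‖a * z ^ d + ∑ i ∈ Finset.range d, φ.coeff i * z ^ i‖
                + ‖∑ i ∈ Finset.range d, φ.coeff i * z ^ i‖ := by
              have := norm_sub_le (a * z ^ d + ∑ i ∈ Finset.range d, φ.coeff i * z ^ i)
                (∑ i ∈ Finset.range d, φ.coeff i * z ^ i)
              simpa using this
            linarith
        _ = ‖φ.eval z‖ := by rw [← heval]
    have hd1 : ‖z‖ ^ d = ‖z‖ ^ (d-1) * ‖z‖ := by
      rw [← pow_succ]; congr 1; omega
    have hfac : ‖a‖ * ‖z‖ ^ d - S * ‖z‖ ^ (d-1) = ‖z‖ ^ (d-1) * (‖a‖ * ‖z‖ - S) := by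
      rw [hd1]; ring
    have hge : S + 2 ≤ ‖a‖ * ‖z‖ := by
      have : (S + 2) / ‖a‖ ≤ B := le_max_right _ _
      have h2 : (S + 2) / ‖a‖ < ‖z‖ := lt_of_le_of_lt this hz
      calc S + 2 = (S + 2) / ‖a‖ * ‖a‖ := by field_simp
      _ ≤ ‖z‖ * ‖a‖ := mul_le_mul_of_nonneg_right h2.le ha.le
      _ = ‖a‖ * ‖z‖ := mul_comm _ _
    have hpow : ‖z‖ ≤ ‖z‖ ^ (d - 1) := by
      calc ‖z‖ = ‖z‖ ^ 1 := (pow_one _).symm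
      _ ≤ ‖z‖ ^ (d-1) := pow_le_pow_right₀ hz1 (by omega)
    calc 2 * ‖z‖ ≤ ‖z‖ ^ (d-1) * 2 := by nlinarith
    _ ≤ ‖z‖ ^ (d-1) * (‖a‖ * ‖z‖ - S) := by
        refine mul_le_mul_of_nonneg_left (by linarith) (by positivity)
    _ = ‖a‖ * ‖z‖ ^ d - S * ‖z‖ ^ (d-1) := hfac.symm
    _ ≤ ‖φ.eval z‖ := hmain
  -- points outside B escape
  intro z hzF
  by_contra hzB
  push_neg at hzB
  have grow : ∀ n, 2 ^ n * ‖z‖ ≤ ‖polyIter φ n z‖ := by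
    intro n
    induction n with
    | zero => simp [polyIter]
    | succ n ih =>
      have hBn : B < ‖polyIter φ n z‖ := by
        calc B < ‖z‖ := hzB
        _ ≤ 2 ^ n * ‖z‖ := le_mul_of_one_le_left (norm_nonneg _) (one_le_pow₀ (by norm_num))
        _ ≤ ‖polyIter φ n z‖ := ih
      rw [polyIter_succ']
      calc 2 ^ (n+1) * ‖z‖ = 2 * (2 ^ n * ‖z‖) := by ring
      _ ≤ 2 * ‖polyIter φ n z‖ := by linarith
      _ ≤ ‖φ.eval (polyIter φ n z)‖ := key _ hBn
  apply hzF
  have hz0 : 0 < ‖z‖ := lt_of_le_of_lt (le_trans zero_le_one hB1) hzB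
  refine tendsto_atTop_mono grow ?_
  exact Tendsto.atTop_mul_const hz0 (tendsto_pow_atTop_atTop_of_one_lt (by norm_num))

lemma filledJulia_nonempty [IsAlgClosed L] (φ : L[X]) (hd : 2 ≤ φ.natDegree) :
    (filledJulia φ).Nonempty := by
  have hφ0 : φ ≠ 0 := natDegree_pos_of_two_le hd
  have hX : (X : L[X]).natDegree < φ.natDegree := by simpa using (show 1 < φ.natDegree by omega)
  have hnd : (φ - X).natDegree = φ.natDegree := by
    rwa [natDegree_sub_eq_left_of_natDegree_lt]
  have hne : φ - X ≠ 0 := fun h => by rw [h, natDegree_zero] at hnd; omega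
  have hdeg : (φ - X).degree ≠ 0 := by
    rw [degree_eq_natDegree hne, hnd]
    exact_mod_cast (by omega : φ.natDegree ≠ 0)
  obtain ⟨z₀, hz₀⟩ := IsAlgClosed.exists_root _ hdeg
  rw [IsRoot.def, eval_sub, eval_X, sub_eq_zero] at hz₀
  have hfix : ∀ n, polyIter φ n z₀ = z₀ := by
    intro n; induction n with
    | zero => rfl
    | succ n ih => rw [polyIter_succ', ih, hz₀]
  exact ⟨z₀, mem_filledJulia_of_bound (C := ‖z₀‖) fun n => by rw [hfix]⟩

end Dynamics

section SupF

open Polynomial Filter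

variable {L : Type*} [NormedField L]

/-- sup of `‖p‖` over the filled Julia set. -/
noncomputable def supF (φ p : L[X]) : ℝ := sSup ((fun z => ‖p.eval z‖) '' filledJulia φ)

lemma supF_bddAbove (φ : L[X]) (hd : 2 ≤ φ.natDegree) (p : L[X]) :
    BddAbove ((fun z => ‖p.eval z‖) '' filledJulia φ) := by
  obtain ⟨B, hB1, hB⟩ := exists_escape_bound φ hd
  refine ⟨(∑ i ∈ Finset.range (p.natDegree + 1), ‖p.coeff i‖) * B ^ p.natDegree, ?_⟩
  rintro r ⟨z, hz, rfl⟩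
  exact norm_eval_le_of_norm_le p hB1 (hB z hz)

lemma le_supF (φ : L[X]) (hd : 2 ≤ φ.natDegree) (p : L[X]) {z : L} (hz : z ∈ filledJulia φ) :
    ‖p.eval z‖ ≤ supF φ p :=
  le_csSup (supF_bddAbove φ hd p) ⟨z, hz, rfl⟩

lemma supF_nonneg [IsAlgClosed L] (φ : L[X]) (hd : 2 ≤ φ.natDegree) (p : L[X]) :
    0 ≤ supF φ p := by
  obtain ⟨z₀, hz₀⟩ := filledJulia_nonempty φ hd
  exact le_trans (norm_nonneg _) (le_supF φ hd p hz₀)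

lemma supF_le [IsAlgClosed L] (φ : L[X]) (hd : 2 ≤ φ.natDegree) (p : L[X]) {c : ℝ}
    (h : ∀ z ∈ filledJulia φ, ‖p.eval z‖ ≤ c) : supF φ p ≤ c := by
  obtain ⟨z₀, hz₀⟩ := filledJulia_nonempty φ hd
  refine csSup_le ⟨‖p.eval z₀‖, z₀, hz₀, rfl⟩ ?_
  rintro r ⟨z, hz, rfl⟩
  exact h z hz

lemma exists_supF_gt [IsAlgClosed L] (φ : L[X]) (hd : 2 ≤ φ.natDegree) (p : L[X]) {c : ℝ}
    (h : c < supF φ p) : ∃ z ∈ filledJulia φ, c < ‖p.eval z‖ := by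
  obtain ⟨z₀, hz₀⟩ := filledJulia_nonempty φ hd
  have hne : ((fun z => ‖p.eval z‖) '' filledJulia φ).Nonempty := ⟨‖p.eval z₀‖, z₀, hz₀, rfl⟩
  obtain ⟨r, ⟨z, hz, rfl⟩, hr⟩ := exists_lt_of_lt_csSup hne h
  exact ⟨z, hz, hr⟩

lemma supF_mul_le [IsAlgClosed L] (φ : L[X]) (hd : 2 ≤ φ.natDegree) (p q : L[X]) :
    supF φ (p * q) ≤ supF φ p * supF φ q := by
  refine supF_le φ hd _ fun z hz => ?_
  rw [eval_mul, norm_mul]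
  exact mul_le_mul (le_supF φ hd p hz) (le_supF φ hd q hz) (norm_nonneg _)
    (supF_nonneg φ hd p)

lemma supF_pow_le [IsAlgClosed L] (φ : L[X]) (hd : 2 ≤ φ.natDegree) (p : L[X]) (k : ℕ) :
    supF φ (p ^ k) ≤ supF φ p ^ k := by
  induction k with
  | zero =>
    refine supF_le φ hd _ fun z hz => ?_
    simp
  | succ k ih =>
    calc supF φ (p ^ (k+1)) = supF φ (p ^ k * p) := by rw [pow_succ]
    _ ≤ supF φ (p ^ k) * supF φ p := supF_mul_le φ hd _ _
    _ ≤ supF φ p ^ k * supF φ p :=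
        mul_le_mul_of_nonneg_right ih (supF_nonneg φ hd p)
    _ = supF φ p ^ (k+1) := by rw [pow_succ]

end SupF

section RootsFacts

open Polynomial

variable {L : Type*} [NormedField L] [IsAlgClosed L]

lemma sub_C_natDegree (φ : L[X]) (hd : 2 ≤ φ.natDegree) (c : L) :
    (φ - C c).natDegree = φ.natDegree :=
  natDegree_sub_eq_left_of_natDegree_lt (by simp [natDegree_C]; omega)

lemma sub_C_ne_zero (φ : L[X]) (hd : 2 ≤ φ.natDegree) (c : L) : φ - C c ≠ 0 := by
  intro h
  have := sub_C_natDegree φ hd c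
  rw [h, natDegree_zero] at this; omega

lemma sub_C_leadingCoeff (φ : L[X]) (hd : 2 ≤ φ.natDegree) (c : L) :
    (φ - C c).leadingCoeff = φ.leadingCoeff := by
  rcases eq_or_ne c 0 with rfl | hc
  · simp
  · refine leadingCoeff_sub_of_degree_lt ?_
    calc (C c).degree = 0 := degree_C hc
    _ < φ.degree := by
        rw [degree_eq_natDegree (natDegree_pos_of_two_le hd)]
        exact_mod_cast (by omega : (0:ℕ) < φ.natDegree)

lemma sub_C_roots_card (φ : L[X]) (hd : 2 ≤ φ.natDegree) (c : L) :
    Multiset.card (φ - C c).roots = φ.natDegree := by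
  rw [splits_iff_card_roots.mp (IsAlgClosed.splits _), sub_C_natDegree φ hd c]

lemma mem_sub_C_roots (φ : L[X]) (hd : 2 ≤ φ.natDegree) {c y : L} :
    y ∈ (φ - C c).roots ↔ φ.eval y = c := by
  rw [mem_roots (sub_C_ne_zero φ hd c), IsRoot.def, eval_sub, eval_C, sub_eq_zero]

lemma sub_C_factor (φ : L[X]) (hd : 2 ≤ φ.natDegree) (c : L) :
    φ - C c = C φ.leadingCoeff * ((φ - C c).roots.map fun y => X - C y).prod := by
  have h0 := (IsAlgClosed.splits (φ - C c)).eq_prod_roots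
  rw [sub_C_leadingCoeff φ hd c] at h0
  exact h0

end RootsFacts

section Infinitude

open Polynomial Filter

variable {L : Type*} [NormedField L] [IsAlgClosed L]

lemma norm_leadingCoeff_mul_pow {α : ℝ} {φ : L[X]} (hd : 2 ≤ φ.natDegree)
    (hα : ‖φ.leadingCoeff‖ * α ^ (φ.natDegree - 1) = 1) :
    ‖φ.leadingCoeff‖ * α ^ φ.natDegree = α := by
  have h : φ.natDegree = (φ.natDegree - 1) + 1 := by omega
  rw [h, pow_succ, ← mul_assoc, hα, one_mul]

lemma filledJulia_infinite (hnontriv : ∃ x : L, 1 < ‖x‖) (φ : L[X])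
    (hd : 2 ≤ φ.natDegree) {α : ℝ} (hα0 : 0 < α)
    (hα : ‖φ.leadingCoeff‖ * α ^ (φ.natDegree - 1) = 1) :
    (filledJulia φ).Infinite := by
  classical
  by_contra hfin
  rw [Set.not_infinite] at hfin
  obtain ⟨B, hB1, hB⟩ := exists_escape_bound φ hd
  obtain ⟨z₀, hz₀⟩ := filledJulia_nonempty φ hd
  haveI : Finite (filledJulia φ) := hfin.to_subtype
  have hmapsto : ∀ z ∈ filledJulia φ, φ.eval z ∈ filledJulia φ :=
    fun z hz => mem_filledJulia_eval.mpr hz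
  set e : filledJulia φ → filledJulia φ := fun y => ⟨φ.eval y, hmapsto y y.2⟩ with he
  have hsurj : Function.Surjective e := by
    rintro ⟨c, hc⟩
    have hcard : Multiset.card (φ - C c).roots = φ.natDegree := sub_C_roots_card φ hd c
    have hpos : 0 < Multiset.card (φ - C c).roots := by omega
    obtain ⟨y, hy⟩ := Multiset.card_pos_iff_exists_mem.mp hpos
    have hyc : φ.eval y = c := (mem_sub_C_roots φ hd).mp hy
    have hyF : y ∈ filledJulia φ := mem_filledJulia_eval.mp (hyc ▸ hc)
    exact ⟨⟨y, hyF⟩, Subtype.ext hyc⟩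
  have hinj : Function.Injective e := Finite.injective_iff_surjective.mpr hsurj
  -- total ramification at every point of F
  have hram : ∀ b ∈ filledJulia φ, ∀ z : L,
      φ.eval z - φ.eval b = φ.leadingCoeff * (z - b) ^ φ.natDegree := by
    intro b hb z
    have hall : ∀ y ∈ (φ - C (φ.eval b)).roots, y = b := by
      intro y hy
      have hyc : φ.eval y = φ.eval b := (mem_sub_C_roots φ hd).mp hy
      have hyF : y ∈ filledJulia φ := mem_filledJulia_eval.mp (hyc ▸ hmapsto b hb)
      have : e ⟨y, hyF⟩ = e ⟨b, hb⟩ := Subtype.ext hyc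
      simpa using congrArg Subtype.val (hinj this)
    have hrepl : (φ - C (φ.eval b)).roots =
        Multiset.replicate φ.natDegree b := by
      rw [Multiset.eq_replicate]
      exact ⟨sub_C_roots_card φ hd _, hall⟩
    have := congrArg (eval z) (sub_C_factor φ hd (φ.eval b))
    rw [eval_sub, eval_C, eval_mul, eval_C, hrepl, Multiset.map_replicate,
      Multiset.prod_replicate, eval_pow, eval_sub, eval_X, eval_C] at this
    exact this
  -- orbit of points near F stays near F
  have hstay : ∀ z b, b ∈ filledJulia φ → ‖z - b‖ ≤ α → ∀ n,
      ∃ c ∈ filledJulia φ, ‖polyIter φ n z - c‖ ≤ α := by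
    intro z b hb hzb n
    induction n with
    | zero => exact ⟨b, hb, hzb⟩
    | succ n ih =>
      obtain ⟨c, hc, hnc⟩ := ih
      refine ⟨φ.eval c, hmapsto c hc, ?_⟩
      rw [polyIter_succ', hram c hc (polyIter φ n z), norm_mul, norm_pow]
      calc ‖φ.leadingCoeff‖ * ‖polyIter φ n z - c‖ ^ φ.natDegree
          ≤ ‖φ.leadingCoeff‖ * α ^ φ.natDegree := by
            refine mul_le_mul_of_nonneg_left ?_ (norm_nonneg _)
            exact pow_le_pow_left₀ (norm_nonneg _) hnc _
        _ = α := norm_leadingCoeff_mul_pow hd hα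
  have hball : ∀ z : L, ‖z - z₀‖ ≤ α → z ∈ filledJulia φ := by
    intro z hz
    refine mem_filledJulia_of_bound (C := B + α) fun n => ?_
    obtain ⟨c, hc, hnc⟩ := hstay z z₀ hz₀ hz n
    calc ‖polyIter φ n z‖ = ‖(polyIter φ n z - c) + c‖ := by ring_nf
    _ ≤ ‖polyIter φ n z - c‖ + ‖c‖ := norm_add_le _ _
    _ ≤ α + B := add_le_add hnc (hB c hc)
    _ = B + α := add_comm _ _
  -- the ball has infinitely many points
  obtain ⟨x, hx⟩ := hnontriv
  have hx0 : x ≠ 0 := by intro h; rw [h, norm_zero] at hx; linarith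
  set y : L := x⁻¹ with hy
  have hy0 : 0 < ‖y‖ := by rw [hy, norm_inv]; positivity
  have hy1 : ‖y‖ < 1 := by
    rw [hy, norm_inv]
    rw [inv_lt_one_iff₀]; right; exact hx
  obtain ⟨k₀, hk₀⟩ := exists_pow_lt_of_lt_one hα0 hy1
  have hmem : ∀ k : ℕ, z₀ + y ^ (k + k₀) ∈ filledJulia φ := by
    intro k
    refine hball _ ?_
    rw [add_sub_cancel_left, norm_pow]
    calc ‖y‖ ^ (k + k₀) ≤ ‖y‖ ^ k₀ :=
      (pow_right_strictAnti₀ hy0 hy1).antitone (by omega : k₀ ≤ k + k₀)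
    _ ≤ α := hk₀.le
  have hginj : Function.Injective (fun k : ℕ => z₀ + y ^ (k + k₀)) := by
    intro k j hkj
    simp only [add_right_inj] at hkj
    by_contra hne
    have : ‖y‖ ^ (k + k₀) = ‖y‖ ^ (j + k₀) := by rw [← norm_pow, hkj, norm_pow]
    rcases Nat.lt_or_ge k j with h | h
    · have := pow_lt_pow_right_of_lt_one₀ hy0 hy1 (by omega : k + k₀ < j + k₀)
      linarith
    · have hkj' : j < k := by omega
      have := pow_lt_pow_right_of_lt_one₀ hy0 hy1 (by omega : j + k₀ < k + k₀)
      linarith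
  exact hfin.not_infinite (Set.infinite_of_injective_forall_mem hginj hmem)

end Infinitude

section KeyLemma

open Polynomial Filter

variable {L : Type*} [NormedField L] [IsAlgClosed L]

lemma multiset_prod_nonneg {s : Multiset ℝ} (h : ∀ r ∈ s, 0 ≤ r) : 0 ≤ s.prod := by
  induction s using Multiset.induction with
  | empty => simp
  | cons a s ih =>
    rw [Multiset.prod_cons]
    exact mul_nonneg (h a (Multiset.mem_cons_self a s))
      (ih fun r hr => h r (Multiset.mem_cons_of_mem hr))

lemma multiset_prod_le_pow {s : Multiset ℝ} {M : ℝ}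
    (h0 : ∀ r ∈ s, 0 ≤ r) (h : ∀ r ∈ s, r ≤ M) : s.prod ≤ M ^ Multiset.card s := by
  induction s using Multiset.induction with
  | empty => simp
  | cons a s ih =>
    rw [Multiset.prod_cons, Multiset.card_cons, pow_succ]
    have hM : 0 ≤ M := le_trans (h0 a (Multiset.mem_cons_self a s)) (h a (Multiset.mem_cons_self a s))
    rw [mul_comm (M ^ Multiset.card s) M]
    exact mul_le_mul (h a (Multiset.mem_cons_self a s))
      (ih (fun r hr => h0 r (Multiset.mem_cons_of_mem hr))
          (fun r hr => h r (Multiset.mem_cons_of_mem hr)))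
      (multiset_prod_nonneg fun r hr => h0 r (Multiset.mem_cons_of_mem hr)) hM

lemma norm_multiset_prod (s : Multiset L) : ‖s.prod‖ = (s.map fun z => ‖z‖).prod := by
  simpa using map_multiset_prod (normHom.toMonoidHom : L →* ℝ) s

lemma multiset_prod_swap {β : Type*} (s t : Multiset β) (f : β → β → ℝ) :
    (s.map fun b => (t.map fun y => f b y).prod).prod
      = (t.map fun y => (s.map fun b => f b y).prod).prod := by
  induction s using Multiset.induction with
  | empty => simp [Multiset.map_const']
  | cons b s ih =>
    simp only [Multiset.map_cons, Multiset.prod_cons, Multiset.prod_map_mul, ih]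

/-- The "pushforward" of a polynomial along `φ`. -/
noncomputable def pushPoly (φ q : L[X]) : L[X] :=
  ((q.roots).map fun β => X - C (φ.eval β)).prod

lemma pushPoly_monic (φ q : L[X]) : (pushPoly φ q).Monic :=
  monic_multiset_prod_of_monic _ _ fun β _ => monic_X_sub_C _

lemma pushPoly_natDegree (φ q : L[X]) (hq : q.Monic) :
    (pushPoly φ q).natDegree = q.natDegree := by
  rw [pushPoly, natDegree_multiset_prod_of_monic _ (fun f hf => by
    obtain ⟨β, _, rfl⟩ := Multiset.mem_map.mp hf
    exact monic_X_sub_C _)]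
  rw [Multiset.map_map]
  have : (Multiset.map (natDegree ∘ fun β => X - C (φ.eval β)) q.roots)
      = Multiset.map (fun _ => 1) q.roots := Multiset.map_congr rfl fun β _ => natDegree_X_sub_C _
  rw [this, Multiset.map_const', Multiset.sum_replicate, smul_eq_mul, mul_one]
  exact splits_iff_card_roots.mp (IsAlgClosed.splits q)

lemma pushPoly_eval_norm (φ : L[X]) (hd : 2 ≤ φ.natDegree) (q : L[X]) (hq : q.Monic) (x : L) :
    ‖(pushPoly φ q).eval x‖
      = ‖φ.leadingCoeff‖ ^ (Multiset.card q.roots) *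
        ((φ - C x).roots.map fun y => ‖q.eval y‖).prod := by
  have h1 : (pushPoly φ q).eval x = (q.roots.map fun β => x - φ.eval β).prod := by
    rw [pushPoly, eval_multiset_prod, Multiset.map_map]
    congr 1
    exact Multiset.map_congr rfl fun β _ => by simp
  -- each factor
  have h2 : ∀ β : L, ‖x - φ.eval β‖
      = ‖φ.leadingCoeff‖ * ((φ - C x).roots.map fun y => ‖β - y‖).prod := by
    intro β
    have h3 := congrArg (eval β) (sub_C_factor φ hd x)
    rw [eval_sub, eval_C, eval_mul, eval_C, eval_multiset_prod, Multiset.map_map] at h3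
    have h4 : (Multiset.map (eval β ∘ fun y => X - C y) (φ - C x).roots)
        = Multiset.map (fun y => β - y) (φ - C x).roots :=
      Multiset.map_congr rfl fun y _ => by simp
    rw [h4] at h3
    rw [← norm_sub_rev, h3, norm_mul, norm_multiset_prod, Multiset.map_map]
    rfl
  rw [h1, norm_multiset_prod, Multiset.map_map]
  have h5 : (Multiset.map ((fun z => ‖z‖) ∘ fun β => x - φ.eval β) q.roots)
      = Multiset.map (fun β => ‖φ.leadingCoeff‖ *
          ((φ - C x).roots.map fun y => ‖β - y‖).prod) q.roots :=
    Multiset.map_congr rfl fun β _ => h2 β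
  rw [h5, Multiset.prod_map_mul, Multiset.map_const', Multiset.prod_replicate]
  congr 1
  -- swap the double product
  rw [multiset_prod_swap q.roots (φ - C x).roots (fun β y => ‖β - y‖)]
  congr 1
  refine Multiset.map_congr rfl fun y _ => ?_
  -- ∏_{β ∈ q.roots} ‖β - y‖ = ‖q.eval y‖
  have h6 := congrArg (eval y) ((IsAlgClosed.splits q).eq_prod_roots_of_monic hq)
  rw [eval_multiset_prod, Multiset.map_map] at h6
  have h7 : (Multiset.map (eval y ∘ fun a => X - C a) q.roots)
      = Multiset.map (fun β => y - β) q.roots := Multiset.map_congr rfl fun β _ => by simp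
  rw [h7] at h6
  rw [h6, norm_multiset_prod, Multiset.map_map]
  exact congrArg Multiset.prod (Multiset.map_congr rfl fun β _ => by
    simp only [Function.comp_apply]; exact norm_sub_rev _ _)

lemma supF_pushPoly_le (φ : L[X]) (hd : 2 ≤ φ.natDegree) (q : L[X]) (hq : q.Monic) :
    supF φ (pushPoly φ q)
      ≤ ‖φ.leadingCoeff‖ ^ q.natDegree * (supF φ q) ^ φ.natDegree := by
  have hroots : Multiset.card q.roots = q.natDegree :=
    splits_iff_card_roots.mp (IsAlgClosed.splits q)
  refine supF_le φ hd _ fun x hx => ?_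
  rw [pushPoly_eval_norm φ hd q hq x, hroots]
  refine mul_le_mul_of_nonneg_left ?_ (by positivity)
  have hcard : Multiset.card ((φ - C x).roots.map fun y => ‖q.eval y‖) = φ.natDegree := by
    rw [Multiset.card_map, sub_C_roots_card φ hd x]
  calc ((φ - C x).roots.map fun y => ‖q.eval y‖).prod
      ≤ (supF φ q) ^ Multiset.card ((φ - C x).roots.map fun y => ‖q.eval y‖) := by
        refine multiset_prod_le_pow ?_ ?_
        · rintro r hr
          obtain ⟨y, _, rfl⟩ := Multiset.mem_map.mp hr
          exact norm_nonneg _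
        · rintro r hr
          obtain ⟨y, hy, rfl⟩ := Multiset.mem_map.mp hr
          have hyF : y ∈ filledJulia φ := by
            have := (mem_sub_C_roots φ hd).mp hy
            exact mem_filledJulia_eval.mp (this ▸ hx)
          exact le_supF φ hd q hyF
    _ = (supF φ q) ^ φ.natDegree := by rw [hcard]

lemma lagrange_lower [DecidableEq L] (φ : L[X]) (hd : 2 ≤ φ.natDegree) (s' : Finset L)
    (hs' : ↑s' ⊆ filledJulia φ) {n : ℕ} (hcard : s'.card = n + 1)
    {q : L[X]} (hq : q.Monic) (hqn : q.natDegree = n) :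
    1 ≤ supF φ q * ∑ w ∈ s', ∏ u ∈ s'.erase w, ‖w - u‖⁻¹ := by
  have hvs : Set.InjOn (id : L → L) ↑s' := Set.injOn_id _
  have hdeg : q.degree < s'.card := by
    rw [Polynomial.degree_eq_natDegree hq.ne_zero, hqn, hcard]
    exact_mod_cast Nat.lt_succ_self n
  have hinterp := Lagrange.eq_interpolate hvs hdeg
  have hco := congrArg (fun p : L[X] => p.coeff n) hinterp
  simp only [Lagrange.interpolate_apply] at hco
  rw [finset_sum_coeff] at hco
  have hbasis : ∀ w ∈ s', (C (q.eval (id w)) * Lagrange.basis s' id w).coeff n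
      = q.eval w * ∏ u ∈ s'.erase w, (w - u)⁻¹ := by
    intro w hw
    rw [coeff_C_mul]
    congr 1
    have hnd : (Lagrange.basis s' id w).natDegree = n := by
      rw [Lagrange.natDegree_basis hvs hw, hcard]
      omega
    rw [← hnd, ← leadingCoeff]
    rw [Lagrange.basis, leadingCoeff_prod]
    refine Finset.prod_congr rfl fun u hu => ?_
    have huw : (w : L) ≠ u := by
      intro h
      exact (Finset.mem_erase.mp hu).1 h.symm
    rw [Lagrange.basisDivisor, leadingCoeff_mul, leadingCoeff_C,
      (monic_X_sub_C (id u)).leadingCoeff, mul_one]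
    rfl
  rw [Finset.sum_congr rfl hbasis] at hco
  have hlc : q.coeff n = 1 := by rw [← hqn, ← leadingCoeff, hq.leadingCoeff]
  have h1 : (1:ℝ) = ‖∑ w ∈ s', q.eval w * ∏ u ∈ s'.erase w, (w - u)⁻¹‖ := by
    rw [← hco, hlc, norm_one]
  rw [h1]
  calc ‖∑ w ∈ s', q.eval w * ∏ u ∈ s'.erase w, (w - u)⁻¹‖
      ≤ ∑ w ∈ s', ‖q.eval w * ∏ u ∈ s'.erase w, (w - u)⁻¹‖ := norm_sum_le _ _
    _ = ∑ w ∈ s', ‖q.eval w‖ * ∏ u ∈ s'.erase w, ‖w - u‖⁻¹ := by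
        refine Finset.sum_congr rfl fun w hw => ?_
        rw [norm_mul, norm_prod]
        congr 1
        exact Finset.prod_congr rfl fun u hu => norm_inv _
    _ ≤ ∑ w ∈ s', supF φ q * ∏ u ∈ s'.erase w, ‖w - u‖⁻¹ := by
        refine Finset.sum_le_sum fun w hw => ?_
        refine mul_le_mul_of_nonneg_right ?_ (Finset.prod_nonneg fun u _ => by positivity)
        exact le_supF φ hd q (hs' hw)
    _ = supF φ q * ∑ w ∈ s', ∏ u ∈ s'.erase w, ‖w - u‖⁻¹ := by rw [Finset.mul_sum]

/-- **Key lemma**: any monic polynomial has sup at least `α ^ deg` on the filled Julia set. -/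
lemma supF_monic_lower (hnontriv : ∃ x : L, 1 < ‖x‖) (φ : L[X]) (hd : 2 ≤ φ.natDegree)
    {α : ℝ} (hα0 : 0 < α) (hα : ‖φ.leadingCoeff‖ * α ^ (φ.natDegree - 1) = 1)
    {p : L[X]} (hp : p.Monic) :
    α ^ p.natDegree ≤ supF φ p := by
  classical
  set d := φ.natDegree with hdd
  set n := p.natDegree with hnn
  have ha : 0 < ‖φ.leadingCoeff‖ := leadingCoeff_norm_pos hd
  -- get n+1 distinct points in F
  obtain ⟨t, htF, htfin, htcard⟩ :=
    (filledJulia_infinite hnontriv φ hd hα0 hα).exists_subset_ncard_eq (n + 1)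
  haveI := htfin.fintype
  set s' : Finset L := htfin.toFinset with hs'def
  have hs'F : ↑s' ⊆ filledJulia φ := by rwa [Set.Finite.coe_toFinset]
  have hs'card : s'.card = n + 1 := by
    rw [← htcard, hs'def, ← Set.ncard_eq_toFinset_card t htfin]
  set W : ℝ := ∑ w ∈ s', ∏ u ∈ s'.erase w, ‖w - u‖⁻¹ with hW
  have hWpos : 0 < W := by
    rw [hW]
    have hne : s'.Nonempty := Finset.card_pos.mp (by omega)
    obtain ⟨w, hw⟩ := hne
    refine Finset.sum_pos' (fun i _ => Finset.prod_nonneg fun u _ => by positivity) ⟨w, hw, ?_⟩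
    refine Finset.prod_pos fun u hu => ?_
    have hwu : w ≠ u := fun h => (Finset.mem_erase.mp hu).1 h.symm
    exact inv_pos.mpr (norm_pos_iff.mpr (sub_ne_zero_of_ne hwu))
  -- all monic degree-n polys have supF ≥ W⁻¹
  have hlow : ∀ q : L[X], q.Monic → q.natDegree = n → W⁻¹ ≤ supF φ q := by
    intro q hq hqn
    have h12 := lagrange_lower φ hd s' hs'F hs'card hq hqn
    rw [inv_eq_one_div, div_le_iff₀ hWpos]
    linarith
  by_contra hcon
  push_neg at hcon
  -- the iterated pushforward sequence
  set seq : ℕ → L[X] := fun m => (pushPoly φ)^[m] p with hseq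
  have hseq_succ : ∀ m, seq (m + 1) = pushPoly φ (seq m) := by
    intro m
    rw [hseq]
    exact Function.iterate_succ_apply' (pushPoly φ) m p
  have hinv : ∀ m, (seq m).Monic ∧ (seq m).natDegree = n := by
    intro m
    induction m with
    | zero => exact ⟨hp, rfl⟩
    | succ m ih =>
      rw [hseq_succ]
      exact ⟨pushPoly_monic φ _, by rw [pushPoly_natDegree φ _ ih.1, ih.2]⟩
  set t' : ℝ := supF φ p / α ^ n with ht'
  have ht'0 : 0 ≤ t' := div_nonneg (supF_nonneg φ hd p) (by positivity)
  have ht'1 : t' < 1 := (div_lt_one (by positivity)).mpr hcon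
  have hbound : ∀ m, supF φ (seq m) ≤ α ^ n * t' ^ (d ^ m) := by
    intro m
    induction m with
    | zero =>
      rw [pow_zero, pow_one, ht']
      rw [mul_div_cancel₀ _ (by positivity : (α:ℝ) ^ n ≠ 0)]
      exact le_of_eq rfl
    | succ m ih =>
      have h9 : ‖φ.leadingCoeff‖ ^ n * α ^ (n * d) = α ^ n := by
        have h10 : n * d = (d - 1) * n + n := by
          have h11 : d - 1 + 1 = d := by omega
          calc n * d = n * ((d-1)+1) := by rw [h11]
          _ = (d-1)*n + n := by ring
        rw [h10, pow_add, ← mul_assoc, pow_mul, ← mul_pow, hα, one_pow, one_mul]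
      have h8 : ‖φ.leadingCoeff‖ ^ n * (α ^ n * t' ^ d ^ m) ^ d = α ^ n * t' ^ d ^ (m+1) := by
        rw [mul_pow, ← pow_mul α n d, ← pow_mul t' (d^m) d, ← mul_assoc, h9, ← pow_succ d m]
      calc supF φ (seq (m+1)) = supF φ (pushPoly φ (seq m)) := by rw [hseq_succ]
        _ ≤ ‖φ.leadingCoeff‖ ^ (seq m).natDegree * (supF φ (seq m)) ^ d :=
            supF_pushPoly_le φ hd _ (hinv m).1
        _ = ‖φ.leadingCoeff‖ ^ n * (supF φ (seq m)) ^ d := by rw [(hinv m).2]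
        _ ≤ ‖φ.leadingCoeff‖ ^ n * (α ^ n * t' ^ d ^ m) ^ d := by
            refine mul_le_mul_of_nonneg_left ?_ (by positivity)
            exact pow_le_pow_left₀ (supF_nonneg φ hd _) ih d
        _ = α ^ n * t' ^ d ^ (m+1) := h8
  -- choose m making the bound small
  have hfinal : ∃ m, α ^ n * t' ^ (d ^ m) < W⁻¹ := by
    rcases eq_or_lt_of_le ht'0 with h0 | h0
    · refine ⟨1, ?_⟩
      rw [← h0, pow_one d, zero_pow (show d ≠ 0 by omega), mul_zero]
      exact inv_pos.mpr hWpos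
    · obtain ⟨m, hm⟩ := exists_pow_lt_of_lt_one (show (0:ℝ) < W⁻¹ / α ^ n by positivity) ht'1
      refine ⟨m, ?_⟩
      have hmd : m ≤ d ^ m := le_of_lt (Nat.lt_pow_self (by omega : 1 < d))
      have : t' ^ (d ^ m) ≤ t' ^ m := (pow_right_strictAnti₀ h0 ht'1).antitone hmd
      calc α ^ n * t' ^ d ^ m ≤ α ^ n * t' ^ m :=
            mul_le_mul_of_nonneg_left this (by positivity)
        _ < α ^ n * (W⁻¹ / α ^ n) := mul_lt_mul_of_pos_left hm (by positivity)
        _ = W⁻¹ := by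
              rw [mul_comm]
              exact div_mul_cancel₀ _ (by positivity)
  obtain ⟨m, hm⟩ := hfinal
  have := hlow (seq m) (hinv m).1 (hinv m).2
  have := hbound m
  linarith

end KeyLemma

section LowerBound
set_option maxHeartbeats 1000000

open Polynomial Filter

variable {L : Type*} [NormedField L] [IsAlgClosed L]

lemma pairProd_nonneg {n : ℕ} (x : Fin n → L) :
    0 ≤ pairDistProd (fun a b => ‖a - b‖) x := by
  refine Finset.prod_nonneg fun i _ => Finset.prod_nonneg fun j _ => ?_
  by_cases h : i = j
  · simp [pairDistProd, h]
  · rw [if_neg h]; exact norm_nonneg _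

lemma pairProd_pos {n : ℕ} {x : Fin n → L} (hx : Function.Injective x) :
    0 < pairDistProd (fun a b => ‖a - b‖) x := by
  refine Finset.prod_pos fun i _ => Finset.prod_pos fun j _ => ?_
  by_cases h : i = j
  · simp [h]
  · rw [if_neg h]
    exact norm_pos_iff.mpr (sub_ne_zero_of_ne fun he => h (hx he))

lemma pairProd_le {n : ℕ} {x : Fin n → L} {B : ℝ} (hB1 : 1 ≤ B) (hx : ∀ i, ‖x i‖ ≤ B) :
    pairDistProd (fun a b => ‖a - b‖) x ≤ (2*B) ^ (n*n) := by
  have hfac : ∀ i j : Fin n, (if i = j then (1:ℝ) else ‖x i - x j‖) ≤ 2*B := by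
    intro i j
    by_cases h : i = j
    · rw [if_pos h]; linarith
    · rw [if_neg h]
      calc ‖x i - x j‖ ≤ ‖x i‖ + ‖x j‖ := norm_sub_le _ _
      _ ≤ 2*B := by have := hx i; have := hx j; linarith
  have hnn : ∀ i j : Fin n, (0:ℝ) ≤ (if i = j then (1:ℝ) else ‖x i - x j‖) := by
    intro i j
    by_cases h : i = j
    · rw [if_pos h]; norm_num
    · rw [if_neg h]; exact norm_nonneg _
  calc pairDistProd (fun a b => ‖a - b‖) x
      ≤ ∏ _i : Fin n, ∏ _j : Fin n, (2*B) := by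
        refine Finset.prod_le_prod (fun i _ => Finset.prod_nonneg fun j _ => hnn i j)
          (fun i _ => Finset.prod_le_prod (fun j _ => hnn i j) (fun j _ => hfac i j))
    _ = (2*B) ^ (n*n) := by
        rw [Finset.prod_const, Finset.prod_const, Finset.card_univ, Fintype.card_fin, ← pow_mul]

/-- row product formula -/
lemma pairProd_row {n : ℕ} (x : Fin n → L) (i : Fin n) :
    (∏ j : Fin n, (if i = j then (1:ℝ) else ‖x i - x j‖))
      = ∏ j ∈ Finset.univ.erase i, ‖x i - x j‖ := by
  classical
  rw [← Finset.prod_erase_mul Finset.univ _ (Finset.mem_univ i), if_pos rfl, mul_one]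
  exact Finset.prod_congr rfl fun j hj => if_neg (fun h => (Finset.mem_erase.mp hj).1 h.symm)

/-- decomposition of the pair product isolating index `i₀` -/
lemma pairProd_decomp {n : ℕ} (x : Fin n → L) (i₀ : Fin n) :
    pairDistProd (fun a b => ‖a - b‖) x
      = (∏ j ∈ Finset.univ.erase i₀, ‖x i₀ - x j‖) ^ 2
        * ∏ i ∈ Finset.univ.erase i₀, ∏ j ∈ Finset.univ.erase i₀,
            (if i = j then (1:ℝ) else ‖x i - x j‖) := by
  classical
  have hrow : ∀ i ∈ Finset.univ.erase i₀,
      (∏ j : Fin n, (if i = j then (1:ℝ) else ‖x i - x j‖))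
        = (∏ j ∈ Finset.univ.erase i₀, (if i = j then (1:ℝ) else ‖x i - x j‖))
          * ‖x i - x i₀‖ := by
    intro i hi
    rw [← Finset.prod_erase_mul Finset.univ _ (Finset.mem_univ i₀)]
    congr 1
    exact if_neg ((Finset.mem_erase.mp hi).1)
  have hcol : (∏ i ∈ Finset.univ.erase i₀, ‖x i - x i₀‖)
      = ∏ j ∈ Finset.univ.erase i₀, ‖x i₀ - x j‖ :=
    Finset.prod_congr rfl fun i _ => norm_sub_rev _ _
  calc pairDistProd (fun a b => ‖a - b‖) x
      = (∏ i ∈ Finset.univ.erase i₀, ∏ j : Fin n, (if i = j then (1:ℝ) else ‖x i - x j‖))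
        * (∏ j : Fin n, (if i₀ = j then (1:ℝ) else ‖x i₀ - x j‖)) :=
        (Finset.prod_erase_mul _ _ (Finset.mem_univ i₀)).symm
    _ = ((∏ i ∈ Finset.univ.erase i₀, ∏ j ∈ Finset.univ.erase i₀,
            (if i = j then (1:ℝ) else ‖x i - x j‖))
          * ∏ i ∈ Finset.univ.erase i₀, ‖x i - x i₀‖)
        * ∏ j ∈ Finset.univ.erase i₀, ‖x i₀ - x j‖ := by
        rw [Finset.prod_congr rfl hrow, Finset.prod_mul_distrib, pairProd_row]
    _ = (∏ j ∈ Finset.univ.erase i₀, ‖x i₀ - x j‖) ^ 2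
        * ∏ i ∈ Finset.univ.erase i₀, ∏ j ∈ Finset.univ.erase i₀,
            (if i = j then (1:ℝ) else ‖x i - x j‖) := by
        rw [hcol]; ring

lemma exists_injective_config {φ : L[X]} (hinf : (filledJulia φ).Infinite) (n : ℕ) :
    ∃ x : Fin n → L, (∀ i, x i ∈ filledJulia φ) ∧ Function.Injective x := by
  let e := hinf.natEmbedding
  refine ⟨fun i => (e i : L), fun i => (e i).2, ?_⟩
  intro i j hij
  have : (i : ℕ) = (j : ℕ) := by
    have := e.injective (Subtype.ext hij)
    exact_mod_cast this
  exact Fin.ext this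

/-- **Lower bound**: every `n`-th diameter of the filled Julia set is at least `α`. -/
lemma nthDiam_lower (hnontriv : ∃ x : L, 1 < ‖x‖) (φ : L[X]) (hd : 2 ≤ φ.natDegree)
    {α : ℝ} (hα0 : 0 < α) (hα : ‖φ.leadingCoeff‖ * α ^ (φ.natDegree - 1) = 1)
    {n : ℕ} (hn : 2 ≤ n) :
    α ≤ nthDiam (fun a b => ‖a - b‖) (filledJulia φ) n := by
  classical
  obtain ⟨B, hB1, hB⟩ := exists_escape_bound φ hd
  have hinf := filledJulia_infinite hnontriv φ hd hα0 hα
  set P : (Fin n → L) → ℝ := fun x => pairDistProd (fun a b => ‖a - b‖) x with hP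
  set SV : Set ℝ := {r | ∃ x : Fin n → L, (∀ i, x i ∈ filledJulia φ) ∧ r = P x} with hSV
  have hSVbdd : BddAbove SV := by
    refine ⟨(2*B) ^ (n*n), ?_⟩
    rintro r ⟨x, hx, rfl⟩
    exact pairProd_le hB1 (fun i => hB _ (hx i))
  obtain ⟨x₀, hx₀F, hx₀inj⟩ := exists_injective_config hinf n (φ := φ)
  have hSVne : SV.Nonempty := ⟨P x₀, x₀, hx₀F, rfl⟩
  set V : ℝ := sSup SV with hV
  have hVpos : 0 < V := lt_of_lt_of_le (pairProd_pos hx₀inj) (le_csSup hSVbdd ⟨x₀, hx₀F, rfl⟩)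
  set α' : ℝ := α ^ (n - 1) with hα'
  have hα'pos : 0 < α' := by positivity
  -- main inequality for every small ε
  have hmain : ∀ ε : ℝ, 0 < ε → ε < V → ε < α' →
      ((V - ε) * (α' - ε) ^ 2) ^ n ≤ V ^ (n + 2) := by
    intro ε hε0 hεV hεα
    obtain ⟨r, ⟨x, hxF, rfl⟩, hr⟩ := exists_lt_of_lt_csSup hSVne
      (show V - ε < V by linarith)
    -- per-index estimate
    have hper : ∀ i : Fin n, (V - ε) * (α' - ε) ^ 2 ≤
        (∏ j ∈ Finset.univ.erase i, ‖x i - x j‖) ^ 2 * V := by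
      intro i
      set Li : ℝ := ∏ j ∈ Finset.univ.erase i, ‖x i - x j‖ with hLi
      set Ri : ℝ := ∏ i' ∈ Finset.univ.erase i, ∏ j ∈ Finset.univ.erase i,
          (if i' = j then (1:ℝ) else ‖x i' - x j‖) with hRi
      have hdecomp : P x = Li ^ 2 * Ri := pairProd_decomp x i
      have hRinn : 0 ≤ Ri := by
        refine Finset.prod_nonneg fun i' _ => Finset.prod_nonneg fun j _ => ?_
        by_cases h : i' = j
        · rw [if_pos h]; norm_num
        · rw [if_neg h]; exact norm_nonneg _
      have hPpos : 0 < P x := by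
        calc (0:ℝ) < V - ε := by linarith
        _ < P x := hr
      have hRipos : 0 < Ri := by
        rcases lt_or_eq_of_le hRinn with h | h
        · exact h
        · exfalso; rw [hdecomp, ← h, mul_zero] at hPpos; exact lt_irrefl _ hPpos
      -- the monic polynomial q_i
      set qi : L[X] := ∏ j ∈ Finset.univ.erase i, (X - C (x j)) with hqi
      have hqimonic : qi.Monic := monic_prod_of_monic _ _ fun j _ => monic_X_sub_C _
      have hqideg : qi.natDegree = n - 1 := by
        rw [hqi, natDegree_prod_of_monic _ _ fun j _ => monic_X_sub_C _]
        simp [natDegree_X_sub_C, Finset.card_erase_of_mem]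
      have hsup : α' ≤ supF φ qi := by
        have := supF_monic_lower hnontriv φ hd hα0 hα hqimonic
        rwa [hqideg] at this
      obtain ⟨z, hzF, hz⟩ := exists_supF_gt φ hd qi (show α' - ε < supF φ qi by linarith)
      have hzval : ‖qi.eval z‖ = ∏ j ∈ Finset.univ.erase i, ‖z - x j‖ := by
        rw [hqi, eval_prod, norm_prod]
        exact Finset.prod_congr rfl fun j _ => by simp
      -- the updated configuration
      set x' : Fin n → L := Function.update x i z with hx'
      have hx'F : ∀ j, x' j ∈ filledJulia φ := by
        intro j
        by_cases h : j = i
        · rw [hx', h, Function.update_self]; exact hzF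
        · rw [hx', Function.update_of_ne h]; exact hxF j
      have hx'P : P x' ≤ V := le_csSup hSVbdd ⟨x', hx'F, rfl⟩
      have hx'decomp : P x' = (∏ j ∈ Finset.univ.erase i, ‖z - x j‖) ^ 2 * Ri := by
        rw [show P x' = pairDistProd (fun a b => ‖a - b‖) x' from rfl, pairProd_decomp x' i]
        congr 1
        · congr 1
          refine Finset.prod_congr rfl fun j hj => ?_
          have hji : j ≠ i := (Finset.mem_erase.mp hj).1
          rw [hx', Function.update_self, Function.update_of_ne hji]
        · rw [hRi]
          refine Finset.prod_congr rfl fun i' hi' => Finset.prod_congr rfl fun j hj => ?_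
          have hi'i : i' ≠ i := (Finset.mem_erase.mp hi').1
          have hji : j ≠ i := (Finset.mem_erase.mp hj).1
          rw [hx', Function.update_of_ne hi'i, Function.update_of_ne hji]
      -- (α' - ε)^2 * Ri ≤ V
      have hstep1 : (α' - ε) ^ 2 * Ri ≤ V := by
        calc (α' - ε) ^ 2 * Ri ≤ (∏ j ∈ Finset.univ.erase i, ‖z - x j‖) ^ 2 * Ri := by
              refine mul_le_mul_of_nonneg_right ?_ hRinn
              refine pow_le_pow_left₀ (by linarith) ?_ 2
              rw [← hzval]
              exact le_of_lt hz
          _ = P x' := hx'decomp.symm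
          _ ≤ V := hx'P
      -- V - ε ≤ Li^2 * Ri
      have hstep2 : V - ε ≤ Li ^ 2 * Ri := by
        rw [← hdecomp]; exact hr.le
      -- combine
      have hLinn : 0 ≤ Li ^ 2 := sq_nonneg _
      calc (V - ε) * (α' - ε) ^ 2
          ≤ (Li ^ 2 * Ri) * ((α' - ε) ^ 2 * Ri / Ri) := by
            rw [mul_div_cancel_right₀ _ (ne_of_gt hRipos)]
            exact mul_le_mul hstep2 (le_refl _) (sq_nonneg _) (by positivity)
        _ ≤ (Li ^ 2 * Ri) * (V / Ri) := by
            refine mul_le_mul_of_nonneg_left ?_ (by positivity)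
            gcongr
        _ = Li ^ 2 * V := by field_simp
    -- multiply over i
    have hprodLi : (∏ i : Fin n, ∏ j ∈ Finset.univ.erase i, ‖x i - x j‖) = P x := by
      rw [show P x = pairDistProd (fun a b => ‖a - b‖) x from rfl]
      unfold pairDistProd
      exact (Finset.prod_congr rfl fun i _ => (pairProd_row x i)).symm
    calc ((V - ε) * (α' - ε) ^ 2) ^ n
        = ∏ _i : Fin n, ((V - ε) * (α' - ε) ^ 2) := by
          rw [Finset.prod_const, Finset.card_univ, Fintype.card_fin]
      _ ≤ ∏ i : Fin n, ((∏ j ∈ Finset.univ.erase i, ‖x i - x j‖) ^ 2 * V) := by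
          refine Finset.prod_le_prod (fun i _ => ?_) (fun i _ => hper i)
          have h1 : (0:ℝ) ≤ V - ε := by linarith
          have h2 : (0:ℝ) ≤ α' - ε := by linarith
          positivity
      _ = (∏ i : Fin n, (∏ j ∈ Finset.univ.erase i, ‖x i - x j‖)) ^ 2 * V ^ n := by
          rw [Finset.prod_mul_distrib, Finset.prod_const, Finset.card_univ,
            Fintype.card_fin, Finset.prod_pow]
      _ = (P x) ^ 2 * V ^ n := by rw [hprodLi]
      _ ≤ V ^ 2 * V ^ n := by
          refine mul_le_mul_of_nonneg_right ?_ (by positivity)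
          refine pow_le_pow_left₀ (le_of_lt (lt_of_lt_of_le (by linarith) hr.le)) ?_ 2
          exact le_csSup hSVbdd ⟨x, hxF, rfl⟩
      _ = V ^ (n + 2) := by rw [← pow_add]; ring_nf
  -- take the limit ε → 0
  have hVlow : (α')^(2*n) * V^n ≤ V ^ (n+2) := by
    set δ : ℝ := min V α' / 2 with hδ
    have hδ0 : 0 < δ := by
      have := lt_min hVpos hα'pos
      positivity
    have hδV : δ < V := by
      have h1 : δ ≤ V / 2 := by
        rw [hδ]
        exact div_le_div_of_nonneg_right (min_le_left _ _) (by norm_num)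
      linarith
    have hδα : δ < α' := by
      have h1 : δ ≤ α' / 2 := by
        rw [hδ]
        exact div_le_div_of_nonneg_right (min_le_right _ _) (by norm_num)
      linarith
    set εk : ℕ → ℝ := fun k => δ / (k + 1) with hεk
    have hεk0 : ∀ k, 0 < εk k := fun k => by positivity
    have hεkδ : ∀ k, εk k ≤ δ := by
      intro k
      rw [hεk]
      rw [div_le_iff₀ (by positivity : (0:ℝ) < (k:ℝ) + 1)]
      nlinarith [hδ0.le, Nat.cast_nonneg (α := ℝ) k]
    have htend : Tendsto εk atTop (nhds 0) := by
      have h2 : Tendsto (fun k : ℕ => δ * (1 / ((k:ℝ) + 1))) atTop (nhds (δ * 0)) :=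
        tendsto_one_div_add_atTop_nhds_zero_nat.const_mul δ
      have h5 : εk = fun k : ℕ => δ * (1 / ((k:ℝ) + 1)) := by
        funext k; rw [hεk]; ring
      rw [h5]
      simpa using h2
    have hTk : Tendsto (fun k => ((V - εk k) * (α' - εk k) ^ 2) ^ n) atTop
        (nhds (((V - 0) * (α' - 0) ^ 2) ^ n)) := by
      refine Tendsto.pow ?_ n
      exact ((tendsto_const_nhds.sub htend)).mul ((tendsto_const_nhds.sub htend).pow 2)
    have hVal : ((V - 0) * (α' - 0) ^ 2) ^ n = (α')^(2*n) * V^n := by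
      rw [sub_zero, sub_zero, mul_pow, ← pow_mul]
      ring
    rw [← hVal]
    refine le_of_tendsto hTk (Filter.Eventually.of_forall fun k => ?_)
    exact hmain (εk k) (hεk0 k) (lt_of_le_of_lt (hεkδ k) hδV) (lt_of_le_of_lt (hεkδ k) hδα)
  -- conclude V ≥ α ^ (n*(n-1))
  have hVge : α ^ (n * (n-1)) ≤ V := by
    have h1 : (α ^ (n*(n-1)))^2 ≤ V^2 := by
      have h2 : (α')^(2*n) = (α ^ (n*(n-1)))^2 := by
        rw [hα', ← pow_mul, ← pow_mul]
        congr 1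
        ring
      have h3 : (α')^(2*n) * V^n ≤ V^2 * V^n := by
        calc (α')^(2*n) * V^n ≤ V^(n+2) := hVlow
        _ = V^2 * V^n := by rw [← pow_add]; ring_nf
      have h4 : (α')^(2*n) ≤ V^2 :=
        le_of_mul_le_mul_right (by calc (α')^(2*n) * V^n ≤ V^2 * V^n := h3) (by positivity)
      rwa [h2] at h4
    nlinarith [hVpos, pow_pos hα0 (n*(n-1))]
  -- transfer to nthDiam via the rpow
  set e : ℝ := (((n : ℝ) * ((n : ℝ) - 1))⁻¹) with he
  have hm : ((n * (n-1) : ℕ) : ℝ) = (n : ℝ) * ((n:ℝ) - 1) := by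
    push_cast [Nat.cast_sub (by omega : 1 ≤ n)]
    ring
  have hmpos : (0:ℝ) < (n : ℝ) * ((n:ℝ) - 1) := by
    have h1 : (2:ℝ) ≤ (n:ℝ) := by exact_mod_cast hn
    nlinarith
  have he0 : 0 < e := by rw [he]; positivity
  -- sSup of the nthDiam set is ≥ (V - εk)^e for all k
  set SD : Set ℝ := {r : ℝ | ∃ x : Fin n → L, (∀ i, x i ∈ filledJulia φ) ∧
      r = pairDistProd (fun a b => ‖a - b‖) x ^ e} with hSD
  have hSDbdd : BddAbove SD := by
    refine ⟨((2*B) ^ (n*n) : ℝ) ^ e, ?_⟩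
    rintro r ⟨x, hx, rfl⟩
    refine Real.rpow_le_rpow (pairProd_nonneg x) (pairProd_le hB1 (fun i => hB _ (hx i))) he0.le
  have hsup_ge : ∀ ε : ℝ, 0 < ε → ε < V → (V - ε) ^ e ≤ sSup SD := by
    intro ε hε0 hεV
    obtain ⟨r, ⟨x, hxF, rfl⟩, hr⟩ := exists_lt_of_lt_csSup hSVne
      (show V - ε < V by linarith)
    calc (V - ε) ^ e ≤ (P x) ^ e :=
          Real.rpow_le_rpow (by linarith) hr.le he0.le
      _ ≤ sSup SD := le_csSup hSDbdd ⟨x, hxF, rfl⟩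
  have hVe : V ^ e ≤ sSup SD := by
    set εk : ℕ → ℝ := fun k => (V/2) / (k + 1) with hεk
    have htend : Tendsto εk atTop (nhds 0) := by
      have h2 : Tendsto (fun k : ℕ => (V/2) * (1 / ((k:ℝ) + 1))) atTop (nhds ((V/2) * 0)) :=
        tendsto_one_div_add_atTop_nhds_zero_nat.const_mul (V/2)
      have h5 : εk = fun k : ℕ => (V/2) * (1 / ((k:ℝ) + 1)) := by
        funext k; rw [hεk]; ring
      rw [h5]
      simpa using h2
    have hcont : ContinuousAt (fun t : ℝ => t ^ e) V :=
      Real.continuousAt_rpow_const V e (Or.inl (ne_of_gt hVpos))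
    have hTk : Tendsto (fun k => (V - εk k) ^ e) atTop (nhds (V ^ e)) := by
      have h3 : Tendsto (fun k => V - εk k) atTop (nhds V) := by
        have h6 : Tendsto (fun _ : ℕ => V) atTop (nhds V) := tendsto_const_nhds
        simpa using h6.sub htend
      exact hcont.tendsto.comp h3
    refine le_of_tendsto hTk (Filter.Eventually.of_forall fun k => ?_)
    refine hsup_ge (εk k) (by positivity) ?_
    have h4 : εk k ≤ V/2 := by
      rw [hεk, div_le_iff₀ (by positivity : (0:ℝ) < (k:ℝ) + 1)]
      nlinarith [Nat.cast_nonneg (α := ℝ) k, hVpos.le]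
    linarith
  -- finish
  have hfinal : α ≤ V ^ e := by
    have h5 : α = (α ^ (n*(n-1)) : ℝ) ^ e := by
      rw [← Real.rpow_natCast α (n*(n-1)), ← Real.rpow_mul hα0.le, hm,
        mul_inv_cancel₀ (ne_of_gt hmpos), Real.rpow_one]
    rw [h5]
    exact Real.rpow_le_rpow (by positivity) hVge he0.le
  calc α ≤ V ^ e := hfinal
  _ ≤ sSup SD := hVe
  _ = nthDiam (fun a b => ‖a - b‖) (filledJulia φ) n := by rw [nthDiam]

end LowerBound

section UpperBoundTools

open Polynomial Filter

variable {L : Type*} [NormedField L] [IsAlgClosed L]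

/-- the polynomial representing the `m`-th iterate -/
noncomputable def iterPoly (φ : L[X]) : ℕ → L[X]
  | 0 => X
  | (m+1) => (iterPoly φ m).comp φ

lemma iterPoly_eval (φ : L[X]) (m : ℕ) (z : L) :
    (iterPoly φ m).eval z = polyIter φ m z := by
  induction m generalizing z with
  | zero => simp [iterPoly, polyIter]
  | succ m ih =>
    rw [iterPoly, eval_comp, ih, polyIter_succ]

lemma iterPoly_natDegree (φ : L[X]) (hd : 2 ≤ φ.natDegree) (m : ℕ) :
    (iterPoly φ m).natDegree = φ.natDegree ^ m := by
  induction m with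
  | zero => simp [iterPoly]
  | succ m ih => rw [iterPoly, natDegree_comp, ih, pow_succ]

lemma iterPoly_leadingCoeff (φ : L[X]) (hd : 2 ≤ φ.natDegree) (m : ℕ) :
    (iterPoly φ m).leadingCoeff
      = φ.leadingCoeff ^ (∑ k ∈ Finset.range m, φ.natDegree ^ k) := by
  induction m with
  | zero => simp [iterPoly]
  | succ m ih =>
    rw [iterPoly, leadingCoeff_comp (by omega), ih, iterPoly_natDegree φ hd m,
      Finset.sum_range_succ, pow_add]

/-- monic renormalization of the `m`-th iterate -/
noncomputable def normIter (φ : L[X]) (m : ℕ) : L[X] :=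
  C ((φ.leadingCoeff ^ (∑ k ∈ Finset.range m, φ.natDegree ^ k))⁻¹) * iterPoly φ m

lemma normIter_monic (φ : L[X]) (hd : 2 ≤ φ.natDegree) (m : ℕ) :
    (normIter φ m).Monic := by
  have ha : φ.leadingCoeff ≠ 0 := leadingCoeff_ne_zero.mpr (natDegree_pos_of_two_le hd)
  have hpow : φ.leadingCoeff ^ (∑ k ∈ Finset.range m, φ.natDegree ^ k) ≠ 0 := pow_ne_zero _ ha
  unfold Polynomial.Monic
  rw [normIter, leadingCoeff_mul, leadingCoeff_C, iterPoly_leadingCoeff φ hd m,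
    inv_mul_cancel₀ hpow]

lemma normIter_natDegree (φ : L[X]) (hd : 2 ≤ φ.natDegree) (m : ℕ) :
    (normIter φ m).natDegree = φ.natDegree ^ m := by
  have ha : φ.leadingCoeff ≠ 0 := leadingCoeff_ne_zero.mpr (natDegree_pos_of_two_le hd)
  rw [normIter, natDegree_C_mul (inv_ne_zero (pow_ne_zero _ ha)), iterPoly_natDegree φ hd m]

lemma alpha_pow_sum (φ : L[X]) (hd : 2 ≤ φ.natDegree) {α : ℝ} (hα0 : 0 < α)
    (hα : ‖φ.leadingCoeff‖ * α ^ (φ.natDegree - 1) = 1) (m : ℕ) :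
    α ^ (φ.natDegree ^ m - 1)
      = (‖φ.leadingCoeff‖ ^ (∑ k ∈ Finset.range m, φ.natDegree ^ k))⁻¹ := by
  have hainv : ‖φ.leadingCoeff‖⁻¹ = α ^ (φ.natDegree - 1) :=
    inv_eq_of_mul_eq_one_right hα
  set d := φ.natDegree with hdd
  induction m with
  | zero => simp
  | succ m ih =>
    have hsplit : d ^ (m+1) - 1 = (d ^ m - 1) + d ^ m * (d - 1) := by
      have h1 : 1 ≤ d ^ m := Nat.one_le_pow _ _ (by omega)
      have h4 : d ^ m ≤ d ^ m * d := Nat.le_mul_of_pos_right _ (by omega)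
      have h3 : d ^ m * (d-1) = d ^ m * d - d ^ m := by
        rw [Nat.mul_sub, Nat.mul_one]
      rw [pow_succ, h3]
      generalize hE : d ^ m * d = e at h4 ⊢
      omega
    rw [hsplit, pow_add, ih, Finset.sum_range_succ, pow_add, mul_inv]
    congr 1
    rw [mul_comm (d ^ m) (d - 1), pow_mul, ← hainv, inv_pow]

lemma supF_normIter (φ : L[X]) (hd : 2 ≤ φ.natDegree) {α : ℝ} (hα0 : 0 < α)
    (hα : ‖φ.leadingCoeff‖ * α ^ (φ.natDegree - 1) = 1)
    {B : ℝ} (hB : ∀ z ∈ filledJulia φ, ‖z‖ ≤ B) (m : ℕ) :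
    supF φ (normIter φ m) ≤ B * α ^ (φ.natDegree ^ m - 1) := by
  rw [alpha_pow_sum φ hd hα0 hα m]
  refine supF_le φ hd _ fun z hz => ?_
  rw [normIter, eval_mul, eval_C, norm_mul, norm_inv, norm_pow, iterPoly_eval]
  rw [mul_comm B _]
  refine mul_le_mul_of_nonneg_left ?_ (by positivity)
  exact hB _ (polyIter_mem_filledJulia hz m)

/-- base-`d` digit sum identity -/
lemma digit_sum_eq (d : ℕ) (hd : 1 ≤ d) :
    ∀ M j, j < d ^ M → ∑ m ∈ Finset.range M, (j / d ^ m % d) * d ^ m = j := by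
  intro M
  induction M with
  | zero =>
    intro j hj
    have hj0 : j = 0 := Nat.lt_one_iff.mp (by simpa using hj)
    subst hj0; simp
  | succ M ih =>
    intro j hj
    rw [Finset.sum_range_succ']
    have hterm : ∀ m, j / d ^ (m+1) % d * d ^ (m+1) = ((j / d) / d ^ m % d * d ^ m) * d := by
      intro m
      rw [pow_succ', Nat.div_div_eq_div_mul]
      ring
    calc (∑ m ∈ Finset.range M, j / d ^ (m+1) % d * d ^ (m+1)) + j / d ^ 0 % d * d ^ 0
        = (∑ m ∈ Finset.range M, ((j / d) / d ^ m % d * d ^ m)) * d + j % d := by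
          rw [Finset.sum_mul]
          congr 1
          · exact Finset.sum_congr rfl fun m _ => hterm m
          · simp
      _ = (j / d) * d + j % d := by
          rw [ih (j/d) ?_]
          rw [Nat.div_lt_iff_lt_mul (by omega)]
          rw [← pow_succ]
          exact hj
      _ = j := by
          rw [mul_comm]
          exact Nat.div_add_mod j d
  
/-- monic polynomial of degree `j < d^M` with small sup on the filled Julia set -/
noncomputable def smallPoly (φ : L[X]) (M j : ℕ) : L[X] :=
  ∏ m ∈ Finset.range M, (normIter φ m) ^ (j / φ.natDegree ^ m % φ.natDegree)

lemma smallPoly_monic (φ : L[X]) (hd : 2 ≤ φ.natDegree) (M j : ℕ) :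
    (smallPoly φ M j).Monic :=
  monic_prod_of_monic _ _ fun m _ => (normIter_monic φ hd m).pow _

lemma smallPoly_natDegree (φ : L[X]) (hd : 2 ≤ φ.natDegree) (M j : ℕ)
    (hj : j < φ.natDegree ^ M) : (smallPoly φ M j).natDegree = j := by
  rw [smallPoly, natDegree_prod_of_monic _ _ fun m _ => (normIter_monic φ hd m).pow _]
  calc ∑ m ∈ Finset.range M, ((normIter φ m) ^ (j / φ.natDegree ^ m % φ.natDegree)).natDegree
      = ∑ m ∈ Finset.range M, (j / φ.natDegree ^ m % φ.natDegree) * φ.natDegree ^ m := by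
        refine Finset.sum_congr rfl fun m _ => ?_
        rw [(normIter_monic φ hd m).natDegree_pow, normIter_natDegree φ hd m]
    _ = j := digit_sum_eq φ.natDegree (by omega) M j hj

lemma supF_prod_le {ι : Type*} (φ : L[X]) (hd : 2 ≤ φ.natDegree)
    (s : Finset ι) (g : ι → L[X]) :
    supF φ (∏ m ∈ s, g m) ≤ ∏ m ∈ s, supF φ (g m) := by
  classical
  induction s using Finset.induction_on with
  | empty =>
    rw [Finset.prod_empty, Finset.prod_empty]
    refine supF_le φ hd _ fun z hz => by simp
  | insert a s hnotmem ih =>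
    rw [Finset.prod_insert hnotmem, Finset.prod_insert hnotmem]
    calc supF φ (g a * ∏ m ∈ s, g m) ≤ supF φ (g a) * supF φ (∏ m ∈ s, g m) :=
          supF_mul_le φ hd _ _
      _ ≤ supF φ (g a) * ∏ m ∈ s, supF φ (g m) :=
          mul_le_mul_of_nonneg_left ih (supF_nonneg φ hd _)

lemma supF_smallPoly (φ : L[X]) (hd : 2 ≤ φ.natDegree) {α : ℝ} (hα0 : 0 < α)
    (hα : ‖φ.leadingCoeff‖ * α ^ (φ.natDegree - 1) = 1)
    {B : ℝ} (hB1 : 1 ≤ B) (hB : ∀ z ∈ filledJulia φ, ‖z‖ ≤ B) (M j : ℕ)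
    (hj : j < φ.natDegree ^ M) :
    supF φ (smallPoly φ M j)
      ≤ (max 1 (B/α)) ^ ((φ.natDegree - 1) * M) * α ^ j := by
  set d := φ.natDegree with hdd
  set K : ℝ := max 1 (B/α) with hK
  have hK1 : (1:ℝ) ≤ K := le_max_left _ _
  have hK0 : (0:ℝ) < K := by linarith
  -- supF of each factor
  have hfac : ∀ m, supF φ ((normIter φ m) ^ (j / d ^ m % d))
      ≤ (K * α ^ (d ^ m)) ^ (j / d ^ m % d) := by
    intro m
    calc supF φ ((normIter φ m) ^ (j / d ^ m % d))
        ≤ (supF φ (normIter φ m)) ^ (j / d ^ m % d) := supF_pow_le φ hd _ _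
      _ ≤ (K * α ^ (d ^ m)) ^ (j / d ^ m % d) := by
          refine pow_le_pow_left₀ (supF_nonneg φ hd _) ?_ _
          calc supF φ (normIter φ m) ≤ B * α ^ (d ^ m - 1) := supF_normIter φ hd hα0 hα hB m
            _ = (B / α) * α ^ (d ^ m) := by
                have h1 : (1:ℕ) ≤ d ^ m := Nat.one_le_pow _ _ (by omega)
                have h2 : d ^ m = (d ^ m - 1) + 1 := by omega
                rw [h2, pow_succ]
                field_simp
                ring_nf
                congr 1; omega
            _ ≤ K * α ^ (d ^ m) := by
                refine mul_le_mul_of_nonneg_right (le_max_right _ _) (by positivity)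
  have hdig : ∀ m, j / d ^ m % d ≤ d - 1 := by
    intro m
    have := Nat.mod_lt (j / d ^ m) (show 0 < d by omega)
    omega
  calc supF φ (smallPoly φ M j)
      ≤ ∏ m ∈ Finset.range M, supF φ ((normIter φ m) ^ (j / d ^ m % d)) :=
        supF_prod_le φ hd _ _
    _ ≤ ∏ m ∈ Finset.range M, (K * α ^ (d ^ m)) ^ (j / d ^ m % d) :=
        Finset.prod_le_prod (fun m _ => supF_nonneg φ hd _) (fun m _ => hfac m)
    _ = (∏ m ∈ Finset.range M, K ^ (j / d ^ m % d))
        * ∏ m ∈ Finset.range M, (α ^ (d ^ m)) ^ (j / d ^ m % d) := by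
        rw [← Finset.prod_mul_distrib]
        exact Finset.prod_congr rfl fun m _ => mul_pow _ _ _
    _ ≤ K ^ ((d - 1) * M) * α ^ j := by
        refine mul_le_mul ?_ ?_ (Finset.prod_nonneg fun m _ => by positivity) (by positivity)
        · calc ∏ m ∈ Finset.range M, K ^ (j / d ^ m % d)
              ≤ ∏ _m ∈ Finset.range M, K ^ (d - 1) :=
                Finset.prod_le_prod (fun m _ => by positivity)
                  (fun m _ => pow_le_pow_right₀ hK1 (hdig m))
            _ = K ^ ((d-1) * M) := by
                rw [Finset.prod_const, Finset.card_range, ← pow_mul]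
        · have heq : ∏ m ∈ Finset.range M, (α ^ (d ^ m)) ^ (j / d ^ m % d) = α ^ j := by
            calc ∏ m ∈ Finset.range M, (α ^ (d ^ m)) ^ (j / d ^ m % d)
                = α ^ (∑ m ∈ Finset.range M, (j / d ^ m % d) * d ^ m) := by
                  rw [← Finset.prod_pow_eq_pow_sum]
                  refine Finset.prod_congr rfl fun m _ => ?_
                  rw [← pow_mul, mul_comm (d ^ m) _]
              _ = α ^ j := by rw [digit_sum_eq d (by omega) M j hj]
          rw [heq]

/-- Hadamard-type bound for the pair product via a determinant expansion. -/
lemma pairProd_le_factorial_bound (φ : L[X]) (hd : 2 ≤ φ.natDegree)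
    {N : ℕ} (x : Fin N → L) (hx : ∀ i, x i ∈ filledJulia φ)
    (p : Fin N → L[X]) (hdeg : ∀ i : Fin N, (p i).natDegree = i)
    (hmon : ∀ i, (p i).Monic) :
    pairDistProd (fun a b => ‖a - b‖) x
      ≤ ((N.factorial : ℝ) * ∏ j, supF φ (p j)) ^ 2 := by
  -- step 1 : pairProd = ‖det vandermonde‖ ^ 2
  have hsym : pairDistProd (fun a b => ‖a - b‖) x
      = ∏ i, ∏ j ∈ Finset.univ.erase i, ‖x j - x i‖ := by
    unfold pairDistProd
    refine Finset.prod_congr rfl fun i _ => ?_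
    rw [pairProd_row]
    exact Finset.prod_congr rfl fun j _ => norm_sub_rev _ _
  have hIoi := Finset.prod_prod_Ioi_mul_eq_prod_prod_off_diag
    (fun a b : Fin N => ‖x a - x b‖)
  have hoffd : pairDistProd (fun a b => ‖a - b‖) x
      = ∏ i, ∏ j ∈ Finset.Ioi i, (‖x j - x i‖ * ‖x i - x j‖) := by
    rw [hsym]
    refine Eq.symm (hIoi.trans (Finset.prod_congr rfl fun i _ =>
      Finset.prod_congr ?_ fun _ _ => rfl))
    ext j
    simp [Finset.mem_compl, Finset.mem_erase]
  have hsq : pairDistProd (fun a b => ‖a - b‖) x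
      = (∏ i, ∏ j ∈ Finset.Ioi i, ‖x j - x i‖) ^ 2 := by
    rw [hoffd, ← Finset.prod_pow]
    refine Finset.prod_congr rfl fun i _ => ?_
    rw [← Finset.prod_pow]
    refine Finset.prod_congr rfl fun j _ => ?_
    rw [sq, norm_sub_rev]
  have hvdm : (∏ i, ∏ j ∈ Finset.Ioi i, ‖x j - x i‖)
      = ‖(Matrix.of (fun i j : Fin N => (p j).eval (x i))).det‖ := by
    rw [← Matrix.det_eval_matrixOfPolynomials_eq_det_vandermonde x p hdeg hmon,
      Matrix.det_vandermonde]
    rw [norm_prod]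
    exact Finset.prod_congr rfl fun i _ => by rw [norm_prod]
  -- step 2: bound the determinant
  have hdet : ‖(Matrix.of (fun i j : Fin N => (p j).eval (x i))).det‖
      ≤ (N.factorial : ℝ) * ∏ j, supF φ (p j) := by
    rw [Matrix.det_apply]
    calc ‖∑ σ : Equiv.Perm (Fin N), Equiv.Perm.sign σ •
            ∏ i, (Matrix.of fun i j : Fin N => (p j).eval (x i)) (σ i) i‖
        ≤ ∑ σ : Equiv.Perm (Fin N), ‖Equiv.Perm.sign σ •
            ∏ i, (Matrix.of fun i j : Fin N => (p j).eval (x i)) (σ i) i‖ :=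
          norm_sum_le _ _
      _ ≤ ∑ _σ : Equiv.Perm (Fin N), ∏ j, supF φ (p j) := by
          refine Finset.sum_le_sum fun σ _ => ?_
          have hnorm : ‖Equiv.Perm.sign σ •
              ∏ i, (Matrix.of fun i j : Fin N => (p j).eval (x i)) (σ i) i‖
              = ‖∏ i, (Matrix.of fun i j : Fin N => (p j).eval (x i)) (σ i) i‖ := by
            rcases Int.units_eq_one_or (Equiv.Perm.sign σ) with h | h <;> rw [h]
            · rw [one_smul]
            · rw [Units.smul_def]
              norm_num
          rw [hnorm, norm_prod]
          refine Finset.prod_le_prod (fun i _ => norm_nonneg _) (fun i _ => ?_)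
          exact le_supF φ hd (p i) (hx (σ i))
      _ = (N.factorial : ℝ) * ∏ j, supF φ (p j) := by
          rw [Finset.sum_const, Finset.card_univ, Fintype.card_perm, Fintype.card_fin,
            nsmul_eq_mul]
  rw [hsq, hvdm]
  refine pow_le_pow_left₀ (norm_nonneg _) hdet 2

end UpperBoundTools

section Final

open Polynomial Filter

variable {L : Type*} [NormedField L] [IsAlgClosed L]

lemma nthDiam_set_bddAbove (φ : L[X]) (hd : 2 ≤ φ.natDegree) {n : ℕ} (hn : 2 ≤ n) :
    BddAbove {r : ℝ | ∃ x : Fin n → L, (∀ i, x i ∈ filledJulia φ) ∧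
      r = pairDistProd (fun a b => ‖a - b‖) x ^ (((n : ℝ) * ((n : ℝ) - 1))⁻¹)} := by
  obtain ⟨B, hB1, hB⟩ := exists_escape_bound φ hd
  have he0 : (0:ℝ) ≤ (((n : ℝ) * ((n : ℝ) - 1))⁻¹) := by
    have h1 : (2:ℝ) ≤ (n:ℝ) := by exact_mod_cast hn
    have : (0:ℝ) ≤ (n : ℝ) * ((n : ℝ) - 1) := by nlinarith
    positivity
  refine ⟨((2*B) ^ (n*n) : ℝ) ^ (((n : ℝ) * ((n : ℝ) - 1))⁻¹), ?_⟩
  rintro r ⟨x, hx, rfl⟩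
  exact Real.rpow_le_rpow (pairProd_nonneg x) (pairProd_le hB1 (fun i => hB _ (hx i))) he0

lemma nthDiam_nonneg (φ : L[X]) (hd : 2 ≤ φ.natDegree) {n : ℕ} (hn : 2 ≤ n) :
    0 ≤ nthDiam (fun a b => ‖a - b‖) (filledJulia φ) n := by
  obtain ⟨z₀, hz₀⟩ := filledJulia_nonempty φ hd
  have hmem : pairDistProd (fun a b => ‖a - b‖) (fun _ : Fin n => z₀)
      ^ (((n : ℝ) * ((n : ℝ) - 1))⁻¹) ∈ {r : ℝ | ∃ x : Fin n → L,
        (∀ i, x i ∈ filledJulia φ) ∧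
        r = pairDistProd (fun a b => ‖a - b‖) x ^ (((n : ℝ) * ((n : ℝ) - 1))⁻¹)} :=
    ⟨fun _ => z₀, fun _ => hz₀, rfl⟩
  refine le_trans (Real.rpow_nonneg (pairProd_nonneg _) _)
    (le_csSup (nthDiam_set_bddAbove φ hd hn) hmem)

/-- square growth of powers -/
lemma sq_le_two_pow {M : ℕ} (hM : 4 ≤ M) : M ^ 2 ≤ 2 ^ M := by
  induction M, hM using Nat.le_induction with
  | base => norm_num
  | succ M hM ih =>
    have h2 : (M+1)^2 ≤ 2 * M^2 := by nlinarith
    calc (M+1)^2 ≤ 2 * M^2 := h2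
    _ ≤ 2 * 2 ^ M := by omega
    _ = 2 ^ (M+1) := by rw [pow_succ]; ring

/-- The main upper estimate for `n = d^M`. -/
lemma nthDiam_upper_est (φ : L[X]) (hd : 2 ≤ φ.natDegree)
    {α : ℝ} (hα0 : 0 < α) (hα : ‖φ.leadingCoeff‖ * α ^ (φ.natDegree - 1) = 1)
    {B : ℝ} (hB1 : 1 ≤ B) (hB : ∀ z ∈ filledJulia φ, ‖z‖ ≤ B)
    (M : ℕ) (hM : 1 ≤ M) :
    nthDiam (fun a b => ‖a - b‖) (filledJulia φ) (φ.natDegree ^ M)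
      ≤ ((((φ.natDegree ^ M).factorial : ℝ) ^ 2
            * (max 1 (B/α)) ^ (2 * ((φ.natDegree - 1) * M) * φ.natDegree ^ M))
          ^ ((((φ.natDegree ^ M : ℕ) : ℝ) * (((φ.natDegree ^ M : ℕ) : ℝ) - 1))⁻¹)) * α := by
  classical
  set d := φ.natDegree with hdd
  set N : ℕ := d ^ M with hN
  have hN2 : 2 ≤ N := by
    calc 2 ≤ d := hd
    _ = d ^ 1 := (pow_one d).symm
    _ ≤ d ^ M := Nat.pow_le_pow_right (by omega) hM
  set K : ℝ := max 1 (B/α) with hK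
  have hK1 : (1:ℝ) ≤ K := le_max_left _ _
  set e : ℝ := (((N : ℝ) * ((N : ℝ) - 1))⁻¹) with he
  have hNR : (2:ℝ) ≤ (N:ℝ) := by exact_mod_cast hN2
  have hprod_pos : (0:ℝ) < (N : ℝ) * ((N : ℝ) - 1) := by nlinarith
  have he0 : (0:ℝ) < e := by rw [he]; positivity
  set S : ℝ := ((N.factorial : ℝ) ^ 2 * K ^ (2 * ((d - 1) * M) * N)) with hS
  have hS1 : (1:ℝ) ≤ S := by
    rw [hS]
    have h1 : (1:ℝ) ≤ (N.factorial : ℝ) := by exact_mod_cast N.factorial_pos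
    have h2 : (1:ℝ) ≤ K ^ (2 * ((d - 1) * M) * N) := one_le_pow₀ hK1
    nlinarith
  -- pair product bound for admissible configurations
  have hP : ∀ x : Fin N → L, (∀ i, x i ∈ filledJulia φ) →
      pairDistProd (fun a b => ‖a - b‖) x ≤ S * α ^ (N * (N-1)) := by
    intro x hx
    set p : Fin N → L[X] := fun j => smallPoly φ M j with hp
    have hdeg : ∀ j : Fin N, (p j).natDegree = (j : ℕ) :=
      fun j => smallPoly_natDegree φ hd M j j.2
    have hmon : ∀ j, (p j).Monic := fun j => smallPoly_monic φ hd M j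
    have hmain := pairProd_le_factorial_bound φ hd x hx p hdeg hmon
    have hsup : ∏ j : Fin N, supF φ (p j) ≤ K ^ ((d - 1) * M * N) * α ^ (∑ j ∈ Finset.range N, j) := by
      calc ∏ j : Fin N, supF φ (p j)
          ≤ ∏ j : Fin N, (K ^ ((d-1) * M) * α ^ (j:ℕ)) := by
            refine Finset.prod_le_prod (fun j _ => supF_nonneg φ hd _) (fun j _ => ?_)
            exact supF_smallPoly φ hd hα0 hα hB1 hB M j j.2
        _ = (∏ _j : Fin N, K ^ ((d-1) * M)) * ∏ j : Fin N, α ^ (j:ℕ) :=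
            Finset.prod_mul_distrib
        _ = K ^ ((d - 1) * M * N) * α ^ (∑ j ∈ Finset.range N, j) := by
            congr 1
            · rw [Finset.prod_const, Finset.card_univ, Fintype.card_fin, ← pow_mul]
            · rw [Finset.prod_pow_eq_pow_sum]
              congr 1
              exact Fin.sum_univ_eq_sum_range (fun j => j) N
    calc pairDistProd (fun a b => ‖a - b‖) x
        ≤ ((N.factorial : ℝ) * ∏ j, supF φ (p j)) ^ 2 := hmain
      _ ≤ ((N.factorial : ℝ) * (K ^ ((d - 1) * M * N) * α ^ (∑ j ∈ Finset.range N, j))) ^ 2 := by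
          refine pow_le_pow_left₀ ?_ ?_ 2
          · refine mul_nonneg (by positivity) (Finset.prod_nonneg fun j _ => supF_nonneg φ hd _)
          · exact mul_le_mul_of_nonneg_left hsup (by positivity)
      _ = S * α ^ (N * (N-1)) := by
          rw [hS, mul_pow, mul_pow, ← pow_mul K, ← pow_mul α, Finset.sum_range_id_mul_two]
          have hexp : (d-1) * M * N * 2 = 2 * ((d-1) * M) * N := by ring
          rw [hexp]
          ring
  -- bound nthDiam
  obtain ⟨z₀, hz₀⟩ := filledJulia_nonempty φ hd
  have hne : {r : ℝ | ∃ x : Fin N → L, (∀ i, x i ∈ filledJulia φ) ∧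
      r = pairDistProd (fun a b => ‖a - b‖) x ^ e}.Nonempty :=
    ⟨_, ⟨fun _ => z₀, fun _ => hz₀, rfl⟩⟩
  refine csSup_le hne ?_
  rintro r ⟨x, hx, rfl⟩
  calc pairDistProd (fun a b => ‖a - b‖) x ^ e
      ≤ (S * α ^ (N * (N-1))) ^ e :=
        Real.rpow_le_rpow (pairProd_nonneg x) (hP x hx) he0.le
    _ = S ^ e * (α ^ (N * (N-1)) : ℝ) ^ e :=
        Real.mul_rpow (by positivity) (by positivity)
    _ = S ^ e * α := by
        congr 1
        have hm : ((N * (N-1) : ℕ) : ℝ) = (N : ℝ) * ((N:ℝ) - 1) := by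
          push_cast [Nat.cast_sub (by omega : 1 ≤ N)]
          ring
        rw [← Real.rpow_natCast α (N * (N-1)), ← Real.rpow_mul hα0.le, hm, he,
          mul_inv_cancel₀ (ne_of_gt hprod_pos), Real.rpow_one]

/-- For every `ε > 0` some `nthDiam (n+2)` is at most `α + ε`. -/
lemma exists_nthDiam_le (φ : L[X]) (hd : 2 ≤ φ.natDegree)
    {α : ℝ} (hα0 : 0 < α) (hα : ‖φ.leadingCoeff‖ * α ^ (φ.natDegree - 1) = 1)
    {ε : ℝ} (hε : 0 < ε) :
    ∃ n : ℕ, nthDiam (fun a b => ‖a - b‖) (filledJulia φ) (n + 2) ≤ α + ε := by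
  classical
  obtain ⟨B, hB1, hB⟩ := exists_escape_bound φ hd
  set d := φ.natDegree with hdd
  set K : ℝ := max 1 (B/α) with hK
  have hK1 : (1:ℝ) ≤ K := le_max_left _ _
  set δ : ℝ := ε / α with hδ
  have hδ0 : 0 < δ := by positivity
  have hlog : 0 < Real.log (1 + δ) := Real.log_pos (by linarith)
  set Cst : ℝ := 2 * (Real.log d + (d - 1 : ℕ) * Real.log K) with hCst
  have hCst0 : 0 ≤ Cst := by
    have h1 : 0 ≤ Real.log d := Real.log_nonneg (by exact_mod_cast (by omega : 1 ≤ d))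
    have h2 : 0 ≤ Real.log K := Real.log_nonneg hK1
    have h3 : (0:ℝ) ≤ (d - 1 : ℕ) := Nat.cast_nonneg _
    rw [hCst]; nlinarith
  set M : ℕ := max 4 (Nat.ceil (2 * Cst / Real.log (1 + δ)) + 1) with hM
  have hM4 : 4 ≤ M := le_max_left _ _
  have hM1 : 1 ≤ M := by omega
  have hMR : (0:ℝ) < M := by
    have : (4:ℝ) ≤ (M:ℝ) := by exact_mod_cast hM4
    linarith
  set N : ℕ := d ^ M with hN
  have hN2 : 2 ≤ N := by
    calc 2 ≤ d := hd
    _ = d ^ 1 := (pow_one d).symm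
    _ ≤ d ^ M := Nat.pow_le_pow_right (by omega) hM1
  have hNR : (2:ℝ) ≤ (N:ℝ) := by exact_mod_cast hN2
  have hprod_pos : (0:ℝ) < (N : ℝ) * ((N : ℝ) - 1) := by nlinarith
  set e : ℝ := (((N : ℝ) * ((N : ℝ) - 1))⁻¹) with he
  have he0 : (0:ℝ) < e := by rw [he]; positivity
  set S : ℝ := ((N.factorial : ℝ) ^ 2 * K ^ (2 * ((d - 1) * M) * N)) with hS
  have hfacpos : (0:ℝ) < (N.factorial : ℝ) := by exact_mod_cast N.factorial_pos
  have hSpos : (0:ℝ) < S := by rw [hS]; positivity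
  -- growth: M^2 ≤ N
  have hMN : (M:ℝ) * ((N:ℝ) - 1)⁻¹ ≤ 2 / M := by
    have h1 : M ^ 2 ≤ N := by
      calc M ^ 2 ≤ 2 ^ M := sq_le_two_pow hM4
      _ ≤ d ^ M := Nat.pow_le_pow_left (by omega) M
    have h2 : ((M:ℝ)) ^ 2 ≤ (N:ℝ) := by exact_mod_cast h1
    have h3 : ((M:ℝ)) ^ 2 / 2 ≤ (N:ℝ) - 1 := by nlinarith
    have h4 : (0:ℝ) < (M:ℝ) ^ 2 / 2 := by positivity
    have h5 : ((N:ℝ) - 1)⁻¹ ≤ ((M:ℝ) ^ 2 / 2)⁻¹ := by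
      exact inv_anti₀ h4 h3
    calc (M:ℝ) * ((N:ℝ) - 1)⁻¹ ≤ (M:ℝ) * ((M:ℝ) ^ 2 / 2)⁻¹ :=
          mul_le_mul_of_nonneg_left h5 (by positivity)
      _ = 2 / M := by field_simp
  -- log S * e ≤ Cst * (M * (N-1)⁻¹)
  have hlogS : Real.log S * e ≤ Cst * ((M:ℝ) * ((N:ℝ) - 1)⁻¹) := by
    have hNe : (N:ℝ) * e = ((N:ℝ) - 1)⁻¹ := by
      rw [he, mul_inv, ← mul_assoc, mul_inv_cancel₀ (by linarith : (N:ℝ) ≠ 0), one_mul]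
    have hlogfac : Real.log (N.factorial : ℝ) ≤ (N:ℝ) * ((M:ℝ) * Real.log d) := by
      have h1 : (N.factorial : ℝ) ≤ ((N:ℝ)) ^ N := by
        exact_mod_cast N.factorial_le_pow
      calc Real.log (N.factorial : ℝ) ≤ Real.log (((N:ℝ)) ^ N) :=
            Real.log_le_log hfacpos h1
        _ = (N:ℝ) * Real.log (N:ℝ) := by rw [Real.log_pow]
        _ = (N:ℝ) * ((M:ℝ) * Real.log d) := by
            congr 1
            rw [hN]
            push_cast
            rw [Real.log_pow]
    have hlogK : Real.log (K ^ (2 * ((d - 1) * M) * N))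
        = (2 * ((d-1:ℕ) * M) * N : ℕ) * Real.log K := by
      rw [Real.log_pow]
    have hexp : Real.log S = 2 * Real.log (N.factorial : ℝ)
        + (2 * ((d-1:ℕ) * M) * N : ℕ) * Real.log K := by
      rw [hS, Real.log_mul (by positivity) (by positivity), Real.log_pow, hlogK]
      push_cast
      ring
    have hcast : ((2 * ((d-1:ℕ) * M) * N : ℕ) : ℝ) = 2 * ((d-1:ℕ):ℝ) * (M:ℝ) * (N:ℝ) := by
      push_cast; ring
    have hlogK0 : 0 ≤ Real.log K := Real.log_nonneg hK1
    have hlogSle : Real.log S ≤ (Cst * (M:ℝ)) * (N:ℝ) := by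
      rw [hexp, hcast, hCst]
      have := hlogfac
      nlinarith [Nat.cast_nonneg (α := ℝ) N, hMR.le]
    calc Real.log S * e ≤ ((Cst * (M:ℝ)) * (N:ℝ)) * e := by
          refine mul_le_mul_of_nonneg_right hlogSle he0.le
      _ = (Cst * (M:ℝ)) * ((N:ℝ) * e) := by ring
      _ = Cst * ((M:ℝ) * ((N:ℝ) - 1)⁻¹) := by rw [hNe]; ring
  -- choice of M gives the desired bound on S^e
  have hMceil : 2 * Cst / Real.log (1 + δ) ≤ (M:ℝ) := by
    have h1 : (Nat.ceil (2 * Cst / Real.log (1 + δ)) : ℝ) ≥ 2 * Cst / Real.log (1 + δ) :=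
      Nat.le_ceil _
    have h2 : Nat.ceil (2 * Cst / Real.log (1 + δ)) ≤ M := by
      rw [hM]
      omega
    have h3 : ((Nat.ceil (2 * Cst / Real.log (1 + δ)) : ℕ) : ℝ) ≤ (M:ℝ) := by
      exact_mod_cast h2
    linarith
  have hSe : S ^ e ≤ 1 + δ := by
    rw [Real.rpow_def_of_pos hSpos]
    have h1 : Real.log S * e ≤ Real.log (1 + δ) := by
      calc Real.log S * e ≤ Cst * ((M:ℝ) * ((N:ℝ) - 1)⁻¹) := hlogS
        _ ≤ Cst * (2 / M) := mul_le_mul_of_nonneg_left hMN hCst0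
        _ = 2 * Cst / M := by ring
        _ ≤ Real.log (1 + δ) := by
            rw [div_le_iff₀ hMR]
            calc 2 * Cst ≤ Real.log (1 + δ) * (2 * Cst / Real.log (1 + δ)) := by
                  rw [mul_div_assoc, mul_comm (Real.log (1+δ)), mul_assoc,
                    div_mul_cancel₀ _ (ne_of_gt hlog)]
                  try rw [mul_comm]
              _ ≤ Real.log (1 + δ) * M := by
                  exact mul_le_mul_of_nonneg_left hMceil hlog.le
    calc Real.exp (Real.log S * e) ≤ Real.exp (Real.log (1 + δ)) := Real.exp_le_exp.mpr h1
    _ = 1 + δ := Real.exp_log (by linarith)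
  refine ⟨N - 2, ?_⟩
  have hN' : N - 2 + 2 = N := by omega
  rw [hN']
  have hest := nthDiam_upper_est φ hd hα0 hα hB1 hB M hM1
  rw [← hdd, ← hN, ← hK] at hest
  calc nthDiam (fun a b => ‖a - b‖) (filledJulia φ) N ≤ S ^ e * α := by
        rw [hS, he]
        exact hest
    _ ≤ (1 + δ) * α := mul_le_mul_of_nonneg_right hSe hα0.le
    _ = α + ε := by
        rw [hδ, add_mul, one_mul, div_mul_cancel₀ _ (ne_of_gt hα0)]

end Final

/-- Let `L` be an algebraically closed field, complete with respect to a
nontrivial absolute value, and let `φ ∈ L[z]` have degree `d ≥ 2` with leading coefficient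
`a_d`.  Then the transfinite diameter of the filled Julia set `F` of `φ` equals
`|a_d| ^ (-1/(d-1))`. -/
theorem stmt0 {L : Type*} [NormedField L] [IsAlgClosed L] [CompleteSpace L]
    (hnontriv : ∃ x : L, 1 < ‖x‖)
    (φ : Polynomial L) (hd : 2 ≤ φ.natDegree) :
    transDiam (fun x y => ‖x - y‖) (filledJulia φ) =
      ‖φ.leadingCoeff‖ ^ (-(1 : ℝ) / ((φ.natDegree : ℝ) - 1)) := by
  classical
  set α : ℝ := ‖φ.leadingCoeff‖ ^ (-(1 : ℝ) / ((φ.natDegree : ℝ) - 1)) with hαdef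
  have ha : 0 < ‖φ.leadingCoeff‖ := leadingCoeff_norm_pos hd
  have hα0 : 0 < α := Real.rpow_pos_of_pos ha _
  have hdR : (2:ℝ) ≤ (φ.natDegree : ℝ) := by exact_mod_cast hd
  have hd1 : ((φ.natDegree - 1 : ℕ) : ℝ) = (φ.natDegree : ℝ) - 1 := by
    push_cast [Nat.cast_sub (by omega : 1 ≤ φ.natDegree)]
    ring
  have hα : ‖φ.leadingCoeff‖ * α ^ (φ.natDegree - 1) = 1 := by
    have h1 : α ^ (φ.natDegree - 1) = ‖φ.leadingCoeff‖⁻¹ := by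
      rw [hαdef, ← Real.rpow_natCast (‖φ.leadingCoeff‖ ^ (-(1 : ℝ) / ((φ.natDegree : ℝ) - 1)))
        (φ.natDegree - 1), ← Real.rpow_mul (norm_nonneg _), hd1,
        div_mul_cancel₀ _ (by linarith : (φ.natDegree : ℝ) - 1 ≠ 0), Real.rpow_neg_one]
    rw [h1, mul_inv_cancel₀ (ne_of_gt ha)]
  refine le_antisymm ?_ ?_
  · -- upper bound
    rw [transDiam]
    refine le_of_forall_pos_le_add fun ε hε => ?_
    obtain ⟨n, hn⟩ := exists_nthDiam_le φ hd hα0 hα hε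
    have hbdd : BddBelow (Set.range fun n : ℕ =>
        nthDiam (fun x y => ‖x - y‖) (filledJulia φ) (n + 2)) := by
      refine ⟨0, ?_⟩
      rintro r ⟨m, rfl⟩
      exact nthDiam_nonneg φ hd (by omega)
    calc (⨅ n : ℕ, nthDiam (fun x y => ‖x - y‖) (filledJulia φ) (n + 2))
        ≤ nthDiam (fun x y => ‖x - y‖) (filledJulia φ) (n + 2) := ciInf_le hbdd n
      _ ≤ α + ε := hn
  · -- lower bound
    rw [transDiam]
    refine le_ciInf fun n => ?_
    exact nthDiam_lower hnontriv φ hd hα0 hα (by omega)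
end

section
/- Let L be a field with an absolute value |·|, and let {S_n} and {S_n'} be sequences of finite subsets of L with S_n' ⊆ S_n for all n, #S_n → ∞, and #S_n/#S_n' → 1. Let λ : L → ℝ be a nonnegative function such that |λ(z) − log⁺|z|| is bounded on L, and assume {S_n} is λ-taut. Then limsup_n d(S_n) ≤ limsup_n d(S_n'). -/
open Filter

/-- `log⁺ t = log (max t 1)`. -/
noncomputable def logPlus (t : ℝ) : ℝ := Real.log (max t 1)

/-- For a finite subset `T` of cardinality `N`, the geometric mean
`d(T) = ∏_{x ≠ y ∈ T} v(x - y) ^ (1/(N(N-1)))` of the pairwise distances. -/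
noncomputable def finsetDiam {L : Type*} [Field L] (v : AbsoluteValue L ℝ)
    (T : Finset L) : ℝ :=
  letI := Classical.decEq L
  (∏ x ∈ T, ∏ y ∈ T, if x = y then 1 else v (x - y)) ^
    (((T.card : ℝ) * ((T.card : ℝ) - 1))⁻¹)

/-- A sequence of finite sets is `λ`-taut if the average of `λ` over `S n` tends to `0`. -/
def IsTaut {L : Type*} (S : ℕ → Finset L) (lam : L → ℝ) : Prop :=
  Tendsto (fun n => ((S n).card : ℝ)⁻¹ * ∑ z ∈ S n, lam z) atTop (nhds 0)

section aux
variable {L : Type*} [Field L] (v : AbsoluteValue L ℝ)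

open Classical in
/-- The double product of pairwise distances. -/
noncomputable def Epr (T : Finset L) : ℝ :=
  ∏ x ∈ T, ∏ y ∈ T, if x = y then (1:ℝ) else v (x - y)

open Classical in
lemma f_pos (x y : L) : (0:ℝ) < if x = y then (1:ℝ) else v (x - y) := by
  split
  · exact one_pos
  · exact v.pos (sub_ne_zero.mpr ‹_›)

lemma Epr_pos (T : Finset L) : 0 < Epr v T :=
  Finset.prod_pos fun x _ => Finset.prod_pos fun y _ => f_pos v x y

lemma finsetDiam_eq (T : Finset L) :
    finsetDiam v T = Epr v T ^ (((T.card : ℝ) * ((T.card : ℝ) - 1))⁻¹) := rfl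

lemma finsetDiam_pos (T : Finset L) : 0 < finsetDiam v T := by
  rw [finsetDiam_eq]; exact Real.rpow_pos_of_pos (Epr_pos v T) _

lemma log_finsetDiam (T : Finset L) :
    Real.log (finsetDiam v T) =
      (((T.card : ℝ) * ((T.card : ℝ) - 1))⁻¹) * Real.log (Epr v T) := by
  rw [finsetDiam_eq, Real.log_rpow (Epr_pos v T), mul_comm]

open Classical in
lemma f_log_le {lam : L → ℝ} {C : ℝ} (hnonneg : ∀ z, 0 ≤ lam z) (hC : 0 ≤ C)
    (hub : ∀ z, logPlus (v z) ≤ lam z + C) (x y : L) :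
    Real.log (if x = y then (1:ℝ) else v (x - y)) ≤
      (Real.log 2 + 2 * C) + lam x + lam y := by
  have h2 : (0:ℝ) ≤ Real.log 2 := Real.log_nonneg one_le_two
  split
  · simp only [Real.log_one]
    have := hnonneg x; have := hnonneg y; linarith
  · have hxy : x ≠ y := ‹_›
    have hpos : (0:ℝ) < v (x - y) := v.pos (sub_ne_zero.mpr hxy)
    rw [Real.log_le_iff_le_exp hpos]
    have h1 : v (x - y) ≤ v x + v y := by
      have := v.add_le x (-y); simpa [sub_eq_add_neg] using this
    have h2' : v x + v y ≤ 2 * (max (v x) 1 * max (v y) 1) := by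
      have hx1 : (1:ℝ) ≤ max (v x) 1 := le_max_right _ _
      have hy1 : (1:ℝ) ≤ max (v y) 1 := le_max_right _ _
      have hx : v x ≤ max (v x) 1 * max (v y) 1 :=
        le_trans (le_max_left _ _) (le_mul_of_one_le_right (le_trans zero_le_one hx1) hy1)
      have hy : v y ≤ max (v x) 1 * max (v y) 1 :=
        le_trans (le_max_left _ _) (le_mul_of_one_le_left (le_trans zero_le_one hy1) hx1)
      linarith
    have hexp : 2 * (max (v x) 1 * max (v y) 1) =
        Real.exp (Real.log 2 + logPlus (v x) + logPlus (v y)) := by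
      rw [Real.exp_add, Real.exp_add, Real.exp_log two_pos,
        logPlus, Real.exp_log (lt_of_lt_of_le one_pos (le_max_right _ _)),
        logPlus, Real.exp_log (lt_of_lt_of_le one_pos (le_max_right _ _))]
      ring
    calc v (x - y) ≤ 2 * (max (v x) 1 * max (v y) 1) := le_trans h1 h2'
      _ = Real.exp (Real.log 2 + logPlus (v x) + logPlus (v y)) := hexp
      _ ≤ Real.exp ((Real.log 2 + 2 * C) + lam x + lam y) := by
          apply Real.exp_le_exp.mpr
          have := hub x; have := hub y; linarith

open Classical in
lemma log_dblprod_le {lam : L → ℝ} {C : ℝ} (hnonneg : ∀ z, 0 ≤ lam z) (hC : 0 ≤ C)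
    (hub : ∀ z, logPlus (v z) ≤ lam z + C) (A B : Finset L) :
    Real.log (∏ x ∈ A, ∏ y ∈ B, if x = y then (1:ℝ) else v (x - y)) ≤
      (A.card : ℝ) * B.card * (Real.log 2 + 2 * C) +
        (B.card : ℝ) * ∑ z ∈ A, lam z + (A.card : ℝ) * ∑ z ∈ B, lam z := by
  rw [Real.log_prod (fun x _ => (Finset.prod_pos fun y _ => f_pos v x y).ne')]
  have h1 : ∀ x ∈ A, Real.log (∏ y ∈ B, if x = y then (1:ℝ) else v (x - y)) ≤
      ∑ y ∈ B, ((Real.log 2 + 2 * C) + lam x + lam y) := by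
    intro x _
    rw [Real.log_prod (fun y _ => (f_pos v x y).ne')]
    exact Finset.sum_le_sum fun y _ => f_log_le v hnonneg hC hub x y
  calc ∑ x ∈ A, Real.log (∏ y ∈ B, if x = y then (1:ℝ) else v (x - y))
      ≤ ∑ x ∈ A, ∑ y ∈ B, ((Real.log 2 + 2 * C) + lam x + lam y) :=
        Finset.sum_le_sum h1
    _ = (A.card : ℝ) * B.card * (Real.log 2 + 2 * C) +
        (B.card : ℝ) * ∑ z ∈ A, lam z + (A.card : ℝ) * ∑ z ∈ B, lam z := by
        simp [Finset.sum_add_distrib, Finset.sum_const, nsmul_eq_mul, Finset.mul_sum]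
        ring

open Classical in
lemma Epr_split {T' T : Finset L} (h : T' ⊆ T) :
    Epr v T = Epr v T' *
      ((∏ x ∈ T', ∏ y ∈ T \ T', if x = y then (1:ℝ) else v (x - y)) *
       (∏ x ∈ T \ T', ∏ y ∈ T, if x = y then (1:ℝ) else v (x - y))) := by
  unfold Epr
  rw [← Finset.prod_sdiff h]
  have hx : (∏ x ∈ T', ∏ y ∈ T, if x = y then (1:ℝ) else v (x - y)) =
      (∏ x ∈ T', ∏ y ∈ T \ T', if x = y then (1:ℝ) else v (x - y)) *
        ∏ x ∈ T', ∏ y ∈ T', if x = y then (1:ℝ) else v (x - y) := by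
    rw [← Finset.prod_mul_distrib]
    exact Finset.prod_congr rfl fun x _ => (Finset.prod_sdiff h).symm
  rw [hx]
  ring

open Classical in
lemma logE_split_le {lam : L → ℝ} {C : ℝ} (hnonneg : ∀ z, 0 ≤ lam z) (hC : 0 ≤ C)
    (hub : ∀ z, logPlus (v z) ≤ lam z + C) {T' T : Finset L} (h : T' ⊆ T) :
    Real.log (Epr v T) ≤ Real.log (Epr v T') +
      2 * (T.card : ℝ) * ((T.card : ℝ) - (T'.card : ℝ)) * (Real.log 2 + 2 * C) +
      3 * (T.card : ℝ) * ∑ z ∈ T, lam z := by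
  have t1pos : (0:ℝ) < ∏ x ∈ T', ∏ y ∈ T \ T', if x = y then (1:ℝ) else v (x - y) :=
    Finset.prod_pos fun x _ => Finset.prod_pos fun y _ => f_pos v x y
  have t2pos : (0:ℝ) < ∏ x ∈ T \ T', ∏ y ∈ T, if x = y then (1:ℝ) else v (x - y) :=
    Finset.prod_pos fun x _ => Finset.prod_pos fun y _ => f_pos v x y
  rw [Epr_split v h, Real.log_mul (Epr_pos v T').ne' (mul_pos t1pos t2pos).ne',
    Real.log_mul t1pos.ne' t2pos.ne']
  have b1 := log_dblprod_le v hnonneg hC hub T' (T \ T')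
  have b2 := log_dblprod_le v hnonneg hC hub (T \ T') T
  have hcard : ((T \ T').card : ℝ) = (T.card : ℝ) - (T'.card : ℝ) := by
    rw [Finset.card_sdiff_of_subset h, Nat.cast_sub (Finset.card_le_card h)]
  rw [hcard] at b1 b2
  set N : ℝ := (T.card : ℝ) with hN
  set N' : ℝ := (T'.card : ℝ) with hN'
  set Sig : ℝ := ∑ z ∈ T, lam z with hSig
  set Sig2 : ℝ := ∑ z ∈ T', lam z with hSig2
  set Sigm : ℝ := ∑ z ∈ T \ T', lam z with hSigm
  have hsum : Sigm + Sig2 = Sig := Finset.sum_sdiff h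
  have hK : (0:ℝ) ≤ Real.log 2 + 2 * C := by
    have : (0:ℝ) ≤ Real.log 2 := Real.log_nonneg one_le_two
    linarith
  have hle : N' ≤ N := Nat.cast_le.mpr (Finset.card_le_card h)
  have hN0 : (0:ℝ) ≤ N := Nat.cast_nonneg _
  have hN'0 : (0:ℝ) ≤ N' := Nat.cast_nonneg _
  have hm : (0:ℝ) ≤ N - N' := by linarith
  have hSig20 : (0:ℝ) ≤ Sig2 := Finset.sum_nonneg fun z _ => hnonneg z
  have hSigm0 : (0:ℝ) ≤ Sigm := Finset.sum_nonneg fun z _ => hnonneg z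
  have ha : N' * ((N - N') * (Real.log 2 + 2 * C)) ≤ N * ((N - N') * (Real.log 2 + 2 * C)) :=
    mul_le_mul_of_nonneg_right hle (mul_nonneg hm hK)
  have hb : (N - N') * Sig2 ≤ N * Sig2 := mul_le_mul_of_nonneg_right (by linarith) hSig20
  have hc : N' * Sigm ≤ N * Sigm := mul_le_mul_of_nonneg_right hle hSigm0
  have hd : N * Sigm ≤ N * Sig := mul_le_mul_of_nonneg_left (by linarith) hN0
  have he : (N - N') * Sig ≤ N * Sig := mul_le_mul_of_nonneg_right (by linarith) (by linarith)
  nlinarith [ha, hb, hc, hd, he]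

/-- The key per-`n` inequality. -/
lemma key_ineq {lam : L → ℝ} {C : ℝ} (hnonneg : ∀ z, 0 ≤ lam z) (hC : 0 ≤ C)
    (hub : ∀ z, logPlus (v z) ≤ lam z + C) {T' T : Finset L} (h : T' ⊆ T)
    (h2' : (2:ℝ) ≤ T'.card) (h2 : (2:ℝ) ≤ T.card) :
    Real.log (finsetDiam v T) ≤
      ((T'.card : ℝ) * ((T'.card : ℝ) - 1) / ((T.card : ℝ) * ((T.card : ℝ) - 1))) *
        Real.log (finsetDiam v T') +
      (2 * (Real.log 2 + 2 * C) *
          ((1 - (T'.card : ℝ) / (T.card : ℝ)) * ((T.card : ℝ) / ((T.card : ℝ) - 1))) +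
        3 * (((∑ z ∈ T, lam z) / (T.card : ℝ)) * ((T.card : ℝ) / ((T.card : ℝ) - 1)))) := by
  rw [log_finsetDiam, log_finsetDiam]
  set n : ℝ := (T.card : ℝ) with hn
  set n' : ℝ := (T'.card : ℝ) with hn'
  have hn0 : (0:ℝ) < n := by linarith
  have hn1 : (0:ℝ) < n - 1 := by linarith
  have hn'0 : (0:ℝ) < n' := by linarith
  have hn'1 : (0:ℝ) < n' - 1 := by linarith
  have main := logE_split_le v hnonneg hC hub h
  have step : (n * (n - 1))⁻¹ * Real.log (Epr v T) ≤
      (n * (n - 1))⁻¹ * (Real.log (Epr v T') +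
        2 * n * (n - n') * (Real.log 2 + 2 * C) + 3 * n * ∑ z ∈ T, lam z) :=
    mul_le_mul_of_nonneg_left main (inv_nonneg.mpr (mul_pos hn0 hn1).le)
  refine step.trans (le_of_eq ?_)
  field_simp
  ring

/-- Upper bound on `log (finsetDiam)` under a tautness-type bound on the `lam`-sum. -/
lemma log_finsetDiam_le {lam : L → ℝ} {C : ℝ} (hnonneg : ∀ z, 0 ≤ lam z) (hC : 0 ≤ C)
    (hub : ∀ z, logPlus (v z) ≤ lam z + C) {T' : Finset L}
    (h2' : (2:ℝ) ≤ T'.card) (hS : ∑ z ∈ T', lam z ≤ (T'.card : ℝ) / 4) :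
    Real.log (finsetDiam v T') ≤ 2 * (Real.log 2 + 2 * C) + 1 := by
  rw [log_finsetDiam]
  set n' : ℝ := (T'.card : ℝ) with hn'
  have hn'0 : (0:ℝ) < n' := by linarith
  have hn'1 : (0:ℝ) < n' - 1 := by linarith
  have hK : (0:ℝ) ≤ Real.log 2 + 2 * C := by
    have : (0:ℝ) ≤ Real.log 2 := Real.log_nonneg one_le_two
    linarith
  have b := log_dblprod_le v hnonneg hC hub T' T'
  have step : (n' * (n' - 1))⁻¹ * Real.log (Epr v T') ≤
      (n' * (n' - 1))⁻¹ * (n' * n' * (Real.log 2 + 2 * C) +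
        n' * ∑ z ∈ T', lam z + n' * ∑ z ∈ T', lam z) :=
    mul_le_mul_of_nonneg_left b (inv_nonneg.mpr (mul_pos hn'0 hn'1).le)
  refine step.trans ?_
  rw [inv_mul_le_iff₀ (mul_pos hn'0 hn'1)]
  have hS0 : (0:ℝ) ≤ ∑ z ∈ T', lam z := Finset.sum_nonneg fun z _ => hnonneg z
  have hSle : n' * ∑ z ∈ T', lam z ≤ n' * (n' / 4) :=
    mul_le_mul_of_nonneg_left hS (by linarith)
  nlinarith [mul_nonneg (mul_nonneg hn'0.le (show (0:ℝ) ≤ n' - 2 by linarith)) hK,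
    mul_nonneg hn'0.le (show (0:ℝ) ≤ n' - 2 by linarith)]
end aux

/-- Let `{S_n}`, `{S_n'}` be sequences of finite subsets of a field `L`
with an absolute value `v`, with `S_n' ⊆ S_n`, `#S_n → ∞`, `#S_n/#S_n' → 1`.  If `λ ≥ 0`
satisfies `|λ(z) - log⁺ v(z)|` bounded and `{S_n}` is `λ`-taut, then
`limsup d(S_n) ≤ limsup d(S_n')`. -/
theorem stmt6 {L : Type*} [Field L] (v : AbsoluteValue L ℝ)
    (S S' : ℕ → Finset L) (hsub : ∀ n, S' n ⊆ S n)
    (hcard : Tendsto (fun n => (S n).card) atTop atTop)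
    (hratio : Tendsto (fun n => ((S n).card : ℝ) / ((S' n).card : ℝ)) atTop (nhds 1))
    (lam : L → ℝ) (hnonneg : ∀ z, 0 ≤ lam z)
    (hbd : ∃ C : ℝ, ∀ z : L, |lam z - logPlus (v z)| ≤ C)
    (htaut : IsTaut S lam) :
    limsup (fun n => finsetDiam v (S n)) atTop ≤
      limsup (fun n => finsetDiam v (S' n)) atTop := by
  classical
  obtain ⟨C₀, hC₀⟩ := hbd
  set C : ℝ := max C₀ 0 with hCdef
  have hC : 0 ≤ C := le_max_right _ _
  have hub : ∀ z, logPlus (v z) ≤ lam z + C := by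
    intro z
    have h := (abs_le.mp (hC₀ z)).1
    have hle : C₀ ≤ C := le_max_left _ _
    linarith
  set K : ℝ := Real.log 2 + 2 * C with hKdef
  have hK : 0 ≤ K := by
    have : (0:ℝ) ≤ Real.log 2 := Real.log_nonneg one_le_two
    rw [hKdef]; linarith
  set N : ℕ → ℝ := fun n => ((S n).card : ℝ) with hNdef
  set N' : ℕ → ℝ := fun n => ((S' n).card : ℝ) with hN'def
  set Lam : ℕ → ℝ := fun n => ∑ z ∈ S n, lam z with hLamdef
  -- basic tendsto facts
  have hNtop : Tendsto N atTop atTop := tendsto_natCast_atTop_atTop.comp hcard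
  have hN2 : ∀ᶠ n in atTop, (2:ℝ) ≤ N n := hNtop.eventually_ge_atTop 2
  have hLN : Tendsto (fun n => Lam n / N n) atTop (nhds 0) := by
    simpa [IsTaut, div_eq_inv_mul] using htaut
  have hNN' : Tendsto (fun n => N' n / N n) atTop (nhds 1) := by
    have h := hratio.inv₀ one_ne_zero
    simpa [inv_div] using h
  have hinvN : Tendsto (fun n => (N n)⁻¹) atTop (nhds 0) := hNtop.inv_tendsto_atTop
  have hNm1 : Tendsto (fun n => N n - 1) atTop atTop := by
    simpa [sub_eq_add_neg] using tendsto_atTop_add_const_right atTop (-1 : ℝ) hNtop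
  have hinvNm1 : Tendsto (fun n => (N n - 1)⁻¹) atTop (nhds 0) := hNm1.inv_tendsto_atTop
  have hNoverNm1 : Tendsto (fun n => N n / (N n - 1)) atTop (nhds 1) := by
    have heq : ∀ᶠ n in atTop, 1 + (N n - 1)⁻¹ = N n / (N n - 1) := by
      filter_upwards [hN2] with n hn
      have h1 : N n - 1 ≠ 0 := by linarith
      field_simp
      ring
    have ht : Tendsto (fun n => (1:ℝ) + (N n - 1)⁻¹) atTop (nhds 1) := by
      simpa using tendsto_const_nhds.add hinvNm1
    exact ht.congr' heq
  -- the error term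
  set eps : ℕ → ℝ := fun n =>
    2 * K * ((1 - N' n / N n) * (N n / (N n - 1))) +
      3 * ((Lam n / N n) * (N n / (N n - 1))) with hepsdef
  have heps : Tendsto eps atTop (nhds 0) := by
    have h1 : Tendsto (fun n => (1 - N' n / N n) * (N n / (N n - 1))) atTop (nhds 0) := by
      have := ((tendsto_const_nhds : Tendsto (fun _ : ℕ => (1:ℝ)) atTop (nhds 1)).sub
        hNN').mul hNoverNm1
      simpa using this
    have h2 : Tendsto (fun n => (Lam n / N n) * (N n / (N n - 1))) atTop (nhds 0) := by
      simpa using hLN.mul hNoverNm1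
    have h3 := ((tendsto_const_nhds : Tendsto (fun _ : ℕ => 2 * K) atTop (nhds (2 * K))).mul
      h1).add ((tendsto_const_nhds : Tendsto (fun _ : ℕ => (3:ℝ)) atTop (nhds 3)).mul h2)
    simp only [hepsdef]
    simpa using h3
  -- the ratio term
  set r : ℕ → ℝ := fun n => N' n * (N' n - 1) / (N n * (N n - 1)) with hrdef
  -- eventually `2 ≤ N'`
  have hN'2 : ∀ᶠ n in atTop, (2:ℝ) ≤ N' n := by
    have h1 : ∀ᶠ n in atTop, N n / N' n ∈ Set.Ioo (1/2 : ℝ) 2 :=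
      hratio.eventually (Ioo_mem_nhds (by norm_num) (by norm_num))
    have h4 : ∀ᶠ n in atTop, (4:ℝ) ≤ N n := hNtop.eventually_ge_atTop 4
    filter_upwards [h1, h4] with n hio h4n
    obtain ⟨hlo, hhi⟩ := hio
    have hpos : 0 < N' n := by
      by_contra hneg
      push_neg at hneg
      have h0 : N' n = 0 := le_antisymm hneg (Nat.cast_nonneg _)
      rw [h0, div_zero] at hlo
      norm_num at hlo
    have : N n < 2 * N' n := (div_lt_iff₀ hpos).mp hhi
    linarith
  have hN'leN : ∀ n, N' n ≤ N n := fun n => Nat.cast_le.mpr (Finset.card_le_card (hsub n))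
  have hrle1 : ∀ᶠ n in atTop, r n ≤ 1 := by
    filter_upwards [hN'2, hN2] with n h2' h2
    simp only [hrdef]
    rw [div_le_one (by nlinarith [hN'leN n])]
    nlinarith [hN'leN n]
  have hr : Tendsto r atTop (nhds 1) := by
    have hlow_t : Tendsto (fun n => (N' n / N n) * (N' n / N n - (N n)⁻¹)) atTop (nhds 1) := by
      simpa using hNN'.mul (hNN'.sub hinvN)
    have hrlow : ∀ᶠ n in atTop, (N' n / N n) * (N' n / N n - (N n)⁻¹) ≤ r n := by
      filter_upwards [hN'2, hN2] with n h2' h2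
      have hn0 : (0:ℝ) < N n := by linarith
      have hn1 : (0:ℝ) < N n - 1 := by linarith
      have hL : (N' n / N n) * (N' n / N n - (N n)⁻¹) = N' n * (N' n - 1) / (N n * N n) := by
        field_simp
      rw [hL]
      simp only [hrdef]
      exact div_le_div_of_nonneg_left (by nlinarith) (mul_pos hn0 hn1) (by nlinarith)
    exact tendsto_of_tendsto_of_tendsto_of_le_of_le' hlow_t tendsto_const_nhds hrlow hrle1
  -- the key inequality
  have hkey : ∀ᶠ n in atTop, Real.log (finsetDiam v (S n)) ≤
      r n * Real.log (finsetDiam v (S' n)) + eps n := by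
    filter_upwards [hN'2, hN2] with n h2' h2
    exact key_ineq v hnonneg hC hub (hsub n) h2' h2
  -- boundedness of the primed diameters
  have hDbB : ∀ᶠ n in atTop, Real.log (finsetDiam v (S' n)) ≤ 2 * K + 1 := by
    have hL8 : ∀ᶠ n in atTop, Lam n / N n ≤ 1/8 :=
      hLN.eventually (eventually_le_nhds (by norm_num))
    have hratio2 : ∀ᶠ n in atTop, N n / N' n < 2 :=
      hratio.eventually (eventually_lt_nhds (by norm_num))
    filter_upwards [hN'2, hN2, hL8, hratio2] with n h2' h2 hL8n hr2
    have hn0 : (0:ℝ) < N n := by linarith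
    have hn'0 : (0:ℝ) < N' n := by linarith
    have hNle : N n < 2 * N' n := (div_lt_iff₀ hn'0).mp hr2
    have hLam : Lam n ≤ N n / 8 := by
      have := (div_le_iff₀ hn0).mp hL8n
      linarith
    have hsum' : ∑ z ∈ S' n, lam z ≤ Lam n :=
      Finset.sum_le_sum_of_subset_of_nonneg (hsub n) (fun z _ _ => hnonneg z)
    have hS : ∑ z ∈ S' n, lam z ≤ N' n / 4 := by
      calc ∑ z ∈ S' n, lam z ≤ Lam n := hsum'
        _ ≤ N n / 8 := hLam
        _ ≤ N' n / 4 := by linarith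
    exact log_finsetDiam_le v hnonneg hC hub h2' hS
  have hbdd' : IsBoundedUnder (· ≤ ·) atTop (fun n => finsetDiam v (S' n)) := by
    apply isBoundedUnder_of_eventually_le (a := Real.exp (2 * K + 1))
    filter_upwards [hDbB] with n h
    calc finsetDiam v (S' n) = Real.exp (Real.log (finsetDiam v (S' n))) :=
          (Real.exp_log (finsetDiam_pos v _)).symm
      _ ≤ Real.exp (2 * K + 1) := Real.exp_le_exp.mpr h
  set P := limsup (fun n => finsetDiam v (S' n)) atTop with hPdef
  have hP0 : 0 ≤ P := le_limsup_of_frequently_le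
    (Eventually.frequently (Eventually.of_forall fun n => (finsetDiam_pos v _).le)) hbdd'
  have hcob : IsCoboundedUnder (· ≤ ·) atTop (fun n => finsetDiam v (S n)) :=
    IsCoboundedUnder.of_frequently_ge (a := 0)
      (Eventually.frequently (Eventually.of_forall fun n => (finsetDiam_pos v _).le))
  suffices hsuf : ∀ e : ℝ, 0 < e →
      limsup (fun n => finsetDiam v (S n)) atTop ≤ (P + e) * Real.exp (2 * e) by
    have hT : Tendsto (fun e : ℝ => (P + e) * Real.exp (2 * e))
        (nhdsWithin 0 (Set.Ioi 0)) (nhds P) := by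
      have hc : Continuous (fun e : ℝ => (P + e) * Real.exp (2 * e)) :=
        (continuous_const.add continuous_id).mul
          (Real.continuous_exp.comp (continuous_const.mul continuous_id))
      have h0 := hc.tendsto 0
      simp only [add_zero, mul_zero, Real.exp_zero, mul_one] at h0
      exact h0.mono_left nhdsWithin_le_nhds
    exact ge_of_tendsto hT (eventually_mem_nhdsWithin.mono fun e he => hsuf e he)
  intro e he
  have hM : 0 < P + e := by linarith
  have hη0 : 0 < min (e / (1 + |Real.log (P + e)|)) 1 :=
    lt_min (div_pos he (by positivity)) one_pos
  set η : ℝ := min (e / (1 + |Real.log (P + e)|)) 1 with hηdef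
  have hη1 : η ≤ 1 := min_le_right _ _
  have hηlM : η * |Real.log (P + e)| ≤ e := by
    have h1 : η ≤ e / (1 + |Real.log (P + e)|) := min_le_left _ _
    calc η * |Real.log (P + e)| ≤ (e / (1 + |Real.log (P + e)|)) * |Real.log (P + e)| :=
          mul_le_mul_of_nonneg_right h1 (abs_nonneg _)
      _ ≤ e := by
          rw [div_mul_eq_mul_div, div_le_iff₀ (by positivity)]
          nlinarith [abs_nonneg (Real.log (P + e))]
  have h1 : ∀ᶠ n in atTop, finsetDiam v (S' n) < P + e :=
    eventually_lt_of_limsup_lt (by linarith) hbdd'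
  have h2 : ∀ᶠ n in atTop, Real.log (finsetDiam v (S' n)) < Real.log (P + e) := by
    filter_upwards [h1] with n h
    exact (Real.lt_log_iff_exp_lt hM).mpr (by rwa [Real.exp_log (finsetDiam_pos v _)])
  have h3 : ∀ᶠ n in atTop, 1 - η ≤ r n :=
    hr.eventually (eventually_ge_nhds (by linarith))
  have h4 : ∀ᶠ n in atTop, eps n ≤ e := heps.eventually (eventually_le_nhds he)
  have hfin : ∀ᶠ n in atTop, finsetDiam v (S n) ≤ (P + e) * Real.exp (2 * e) := by
    filter_upwards [hkey, h2, h3, hrle1, h4] with n hk hb hr1 hr2 hε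
    have hrb : r n * Real.log (finsetDiam v (S' n)) ≤
        Real.log (P + e) + η * |Real.log (P + e)| := by
      set b := Real.log (finsetDiam v (S' n)) with hbdef
      rcases le_or_gt 0 b with hcase | hcase
      · have h5 : r n * b ≤ 1 * b := mul_le_mul_of_nonneg_right hr2 hcase
        have h6 : (0:ℝ) ≤ η * |Real.log (P + e)| := mul_nonneg hη0.le (abs_nonneg _)
        rw [one_mul] at h5
        linarith
      · have h5 : r n * b ≤ (1 - η) * b := mul_le_mul_of_nonpos_right hr1 hcase.le
        have h6 : (1 - η) * b ≤ (1 - η) * Real.log (P + e) :=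
          mul_le_mul_of_nonneg_left hb.le (by linarith)
        have h7 : -Real.log (P + e) ≤ |Real.log (P + e)| := neg_le_abs _
        nlinarith [hη0.le]
    have hDa : Real.log (finsetDiam v (S n)) ≤ Real.log (P + e) + 2 * e := by
      linarith
    calc finsetDiam v (S n) = Real.exp (Real.log (finsetDiam v (S n))) :=
          (Real.exp_log (finsetDiam_pos v _)).symm
      _ ≤ Real.exp (Real.log (P + e) + 2 * e) := Real.exp_le_exp.mpr hDa
      _ = (P + e) * Real.exp (2 * e) := by rw [Real.exp_add, Real.exp_log hM]
  exact limsup_le_of_le hcob hfin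
end
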